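/- arXiv:2405.07750 — 3 statements merged into one kernel-verified Lean document; each statement's English description precedes it below -/
import Mathlib

section
/- Let S = (V, B) be a Steiner triple system of order v, let a, b be distinct points, and let x_1, x_2, …, x_{2k} be the consecutive vertices of a cycle of length 2k in the cycle graph C_ab. Then the collection of blocks obtained from B by removing the 2k blocks {a,x_1,x_2}, {a,x_3,x_4}, …, {a,x_{2k-1},x_{2k}}, {b,x_2,x_3}, …, {b,x_{2k-2},x_{2k-1}}, {b,x_{2k},x_1} and replacing them by the 2k blocks obtained from these by exchanging the roles of a and b is again a Steiner triple system of order v. -/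
/-- A Steiner triple system of order `v` on the point set `Fin v`:
a collection of 3-element blocks such that every pair of distinct points
lies in exactly one block. -/
structure STS (v : ℕ) where
  blocks : Finset (Finset (Fin v))
  card_blocks : ∀ B ∈ blocks, B.card = 3
  covers : ∀ x y : Fin v, x ≠ y → ∃! B, B ∈ blocks ∧ x ∈ B ∧ y ∈ B

/-- Isomorphism of Steiner triple systems on the same point set: a bijection of the
points mapping the block set of one onto the block set of the other. -/
def STS.Iso {v : ℕ} (S S' : STS v) : Prop :=
  ∃ φ : Equiv.Perm (Fin v), ∀ B : Finset (Fin v), B ∈ S.blocks ↔ B.image φ ∈ S'.blocks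

/-- The cycle graph `C_ab` of an STS: vertices are the points outside the block
through `a` and `b` (the remaining points are isolated vertices of this graph),
and `x`, `y` are adjacent whenever `{a,x,y}` or `{b,x,y}` is a block. -/
def STS.cycleGraph {v : ℕ} (S : STS v) (a b : Fin v) : SimpleGraph (Fin v) :=
  SimpleGraph.fromRel fun x y =>
    (∀ B ∈ S.blocks, a ∈ B → b ∈ B → x ∉ B ∧ y ∉ B) ∧
    ((({a, x, y} : Finset (Fin v)) ∈ S.blocks) ∨ (({b, x, y} : Finset (Fin v)) ∈ S.blocks))

/-- `x 0, x 1, …, x (2k-1)` are the consecutive vertices of a cycle of length `2k`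
in the cycle graph `C_ab`, listed so that the blocks through `a` occupy the
even positions and the blocks through `b` the odd positions. -/
def IsSwitchCycle {v : ℕ} (S : STS v) (a b : Fin v) (k : ℕ)
    (x : ZMod (2 * k) → Fin v) : Prop :=
  2 ≤ k ∧ a ≠ b ∧ Function.Injective x ∧
  (∀ i : ZMod (2 * k), (S.cycleGraph a b).Adj (x i) (x (i + 1))) ∧
  (∀ j : Fin k,
    (({a, x ((2 * (j : ℕ) : ℕ)), x ((2 * (j : ℕ) + 1 : ℕ))} : Finset (Fin v)) ∈ S.blocks) ∧
    (({b, x ((2 * (j : ℕ) + 1 : ℕ)), x ((2 * (j : ℕ) + 2 : ℕ))} : Finset (Fin v)) ∈ S.blocks))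

/-- The `2k` blocks of the STS corresponding to the cycle with consecutive
vertices `x 0, …, x (2k-1)` in the cycle graph `C_ab`. -/
def removedBlocks {v : ℕ} (a b : Fin v) (k : ℕ)
    (x : ZMod (2 * k) → Fin v) : Finset (Finset (Fin v)) :=
  (Finset.univ.image fun j : Fin k =>
    ({a, x ((2 * (j : ℕ) : ℕ)), x ((2 * (j : ℕ) + 1 : ℕ))} : Finset (Fin v))) ∪
  (Finset.univ.image fun j : Fin k =>
    ({b, x ((2 * (j : ℕ) + 1 : ℕ)), x ((2 * (j : ℕ) + 2 : ℕ))} : Finset (Fin v)))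

/-- The block set obtained from `S` by the cycle switch on the cycle
`x 0, …, x (2k-1)` of `C_ab`: the `2k` cycle blocks are removed and replaced
by the blocks obtained from them by exchanging the roles of `a` and `b`. -/
def switchedBlocks {v : ℕ} (S : STS v) (a b : Fin v) (k : ℕ)
    (x : ZMod (2 * k) → Fin v) : Finset (Finset (Fin v)) :=
  (S.blocks \ removedBlocks a b k x) ∪
    (removedBlocks a b k x).image (Finset.image (Equiv.swap a b))

/-- `S'` is obtained from `S` by a single cycle switch of a cycle whose length lies
in the set `C`. -/
def SwitchStep {v : ℕ} (C : Set ℕ) (S S' : STS v) : Prop :=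
  ∃ (a b : Fin v) (k : ℕ) (x : ZMod (2 * k) → Fin v),
    2 * k ∈ C ∧ IsSwitchCycle S a b k x ∧ S'.blocks = switchedBlocks S a b k x

/-- The switching graph `Sw_C(v)`: vertices are the isomorphism classes of `STS(v)`s,
with an edge between two (distinct) classes whenever some system in one class is
transformed by a single cycle switch, of a cycle whose length lies in `C`, into a
system in the other class. -/
def SwGraph (v : ℕ) (C : Set ℕ) : SimpleGraph (Quot (@STS.Iso v)) :=
  SimpleGraph.fromRel fun q q' =>
    ∃ S S' : STS v, Quot.mk _ S = q ∧ Quot.mk _ S' = q' ∧ SwitchStep C S S'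

/-- The STS `S` contains a cycle of length `n`, i.e. some cycle graph of `S`
has a cycle of length `n`. -/
def STS.HasCycle {v : ℕ} (S : STS v) (n : ℕ) : Prop :=
  ∃ a b : Fin v, a ≠ b ∧ ∃ (z : Fin v) (w : (S.cycleGraph a b).Walk z z),
    w.IsCycle ∧ w.length = n

/-- `W` is the vertex set of a cycle of length `n` in the cycle graph `C_ab`. -/
def CycleOn {v : ℕ} (S : STS v) (a b : Fin v) (n : ℕ) (W : Finset (Fin v)) : Prop :=
  W.card = n ∧ ∃ z ∈ W, ∃ w : (S.cycleGraph a b).Walk z z,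
    w.IsCycle ∧ w.length = n ∧ ∀ u : Fin v, u ∈ w.support ↔ u ∈ W

/-- The number of cycles of length `n` in the STS `S`: a cycle is recorded as a pair
consisting of the (unordered) pair `{a,b}` of points and the vertex set of the cycle
in `C_ab`. -/
noncomputable def STS.numCycles {v : ℕ} (S : STS v) (n : ℕ) : ℕ :=
  Nat.card {p : Finset (Fin v) × Finset (Fin v) //
    ∃ a b : Fin v, a ≠ b ∧ p.1 = {a, b} ∧ CycleOn S a b n p.2}

/-- The cycle graph `C_ab` decomposes as the disjoint union of cycles whose vertex
sets are listed in `Ws` and whose lengths are given by the list `L`. -/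
def CycleStructure {v : ℕ} (S : STS v) (a b : Fin v) (L : List ℕ) : Prop :=
  ∃ Ws : List (Finset (Fin v)),
    Ws.map Finset.card = L ∧ List.Pairwise Disjoint Ws ∧
    (∀ W ∈ Ws, CycleOn S a b W.card W) ∧
    (∀ z : Fin v, (∀ B ∈ S.blocks, a ∈ B → b ∈ B → z ∉ B) ↔ ∃ W ∈ Ws, z ∈ W)

/-- The six points `a,…,f` carry a Pasch configuration of `S`, with blocks
`{a,b,c}, {a,d,e}, {b,e,f}, {c,d,f}`. -/
def PaschQuad {v : ℕ} (S : STS v) (a b c d e f : Fin v) : Prop :=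
  ({a, b, c, d, e, f} : Finset (Fin v)).card = 6 ∧
  ({a, b, c} : Finset (Fin v)) ∈ S.blocks ∧ ({a, d, e} : Finset (Fin v)) ∈ S.blocks ∧
  ({b, e, f} : Finset (Fin v)) ∈ S.blocks ∧ ({c, d, f} : Finset (Fin v)) ∈ S.blocks

/-- `S` contains a Pasch configuration. -/
def STS.HasPasch {v : ℕ} (S : STS v) : Prop :=
  ∃ a b c d e f : Fin v, PaschQuad S a b c d e f

/-- `P` is (the block set of) a Pasch configuration of `S`. -/
def IsPaschConfig {v : ℕ} (S : STS v) (P : Finset (Finset (Fin v))) : Prop :=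
  ∃ a b c d e f : Fin v, PaschQuad S a b c d e f ∧
    P = {({a, b, c} : Finset (Fin v)), {a, d, e}, {b, e, f}, {c, d, f}}

/-- The block set obtained from `S` by switching the Pasch configuration
`{a,b,c}, {a,d,e}, {b,e,f}, {c,d,f}`: its four blocks are replaced by the unique
other set of four blocks on the same six points covering the same pairs. -/
def paschSwitched {v : ℕ} (S : STS v) (a b c d e f : Fin v) : Finset (Finset (Fin v)) :=
  (S.blocks \ {({a, b, c} : Finset (Fin v)), {a, d, e}, {b, e, f}, {c, d, f}}) ∪
    {({a, b, e} : Finset (Fin v)), {a, c, d}, {b, c, f}, {d, e, f}}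

/-- `S` and `S'` are twin systems: they are non-isomorphic, each contains exactly one
Pasch configuration, and switching this unique Pasch configuration in each system
yields a system isomorphic to the other. -/
def IsTwinPair {v : ℕ} (S S' : STS v) : Prop :=
  ¬ S.Iso S' ∧
  (∃! P, IsPaschConfig S P) ∧ (∃! P, IsPaschConfig S' P) ∧
  (∀ a b c d e f : Fin v, PaschQuad S a b c d e f →
    ∃ T : STS v, T.blocks = paschSwitched S a b c d e f ∧ T.Iso S') ∧
  (∀ a b c d e f : Fin v, PaschQuad S' a b c d e f →
    ∃ T : STS v, T.blocks = paschSwitched S' a b c d e f ∧ T.Iso S)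

/-- The isomorphism classes `q` and `q'` are the classes of a pair of twin systems. -/
def QTwin {v : ℕ} (q q' : Quot (@STS.Iso v)) : Prop :=
  ∃ S S' : STS v, Quot.mk _ S = q ∧ Quot.mk _ S' = q' ∧ IsTwinPair S S'

/-!
The pairs covered by the `2k` cycle blocks are `{a, x_i}`, `{b, x_i}` and `{x_i, x_{i+1}}` for all
`i`, and this set of pairs is invariant under exchanging `a` and `b`, since the cycle alternates
between blocks through `a` and blocks through `b`. Replacing a set of blocks of a Steiner triple
system by another partial triple system covering exactly the same pairs gives again a Steiner
triple system.
-/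

open Finset

variable {α : Type*}

def CoversPair (R : Finset (Finset α)) (y z : α) : Prop :=
  ∃ C ∈ R, y ∈ C ∧ z ∈ C

namespace CoversPair

variable {R : Finset (Finset α)} {y z : α}

theorem symm (h : CoversPair R y z) : CoversPair R z y :=
  let ⟨C, hC, hy, hz⟩ := h
  ⟨C, hC, hz, hy⟩

theorem diag_left (h : CoversPair R y z) : CoversPair R y y :=
  let ⟨C, hC, hy, _⟩ := h
  ⟨C, hC, hy, hy⟩

theorem diag_right (h : CoversPair R y z) : CoversPair R z z :=
  h.symm.diag_left

theorem of_mem_triple [DecidableEq α] {p u w : α} (hpu : CoversPair R p u)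
    (hpw : CoversPair R p w) (huw : CoversPair R u w) :
    ∀ y ∈ ({p, u, w} : Finset α), ∀ z ∈ ({p, u, w} : Finset α), CoversPair R y z := by
  simp only [mem_insert, mem_singleton]
  rintro y (rfl | rfl | rfl) z (rfl | rfl | rfl)
  exacts [hpu.diag_left, hpu, hpw, hpu.symm, hpu.diag_right, huw, hpw.symm, huw.symm,
    hpw.diag_right]

end CoversPair

section Involution

variable [DecidableEq α] {σ : α → α}

theorem Function.Involutive.mem_finset_image_iff (hσ : Function.Involutive σ) {C : Finset α}
    {y : α} : y ∈ C.image σ ↔ σ y ∈ C := by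
  constructor
  · intro hy
    obtain ⟨u, hu, rfl⟩ := mem_image.1 hy
    rwa [hσ u]
  · intro hy
    simpa only [hσ y] using mem_image_of_mem σ hy

theorem coversPair_image_image_iff (hσ : Function.Involutive σ) {R : Finset (Finset α)}
    (hR : ∀ C ∈ R, ∀ y ∈ C.image σ, ∀ z ∈ C.image σ, CoversPair R y z) (y z : α) :
    CoversPair (R.image (image σ)) y z ↔ CoversPair R y z := by
  constructor
  · rintro ⟨C', hC', hy, hz⟩
    obtain ⟨C, hC, rfl⟩ := mem_image.1 hC'
    exact hR C hC y hy z hz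
  · rintro ⟨C, hC, hy, hz⟩
    obtain ⟨D, hD, hyD, hzD⟩ :=
      hR C hC (σ y) (hσ.mem_finset_image_iff.2 (by rwa [hσ y]))
        (σ z) (hσ.mem_finset_image_iff.2 (by rwa [hσ z]))
    exact ⟨D.image σ, mem_image_of_mem _ hD, hσ.mem_finset_image_iff.2 hyD,
      hσ.mem_finset_image_iff.2 hzD⟩

end Involution

namespace STS

variable {v : ℕ} (S : STS v)

theorem eq_of_mem_of_mem {C D : Finset (Fin v)} (hC : C ∈ S.blocks) (hD : D ∈ S.blocks)
    {y z : Fin v} (hyz : y ≠ z) (hyC : y ∈ C) (hzC : z ∈ C) (hyD : y ∈ D) (hzD : z ∈ D) :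
    C = D :=
  (S.covers y z hyz).unique ⟨hC, hyC, hzC⟩ ⟨hD, hyD, hzD⟩

theorem exists_blocks_eq_sdiff_union {R R' : Finset (Finset (Fin v))} (hR : R ⊆ S.blocks)
    (hR'card : ∀ B ∈ R', B.card = 3)
    (hR'unique : ∀ y z, y ≠ z → ∀ C ∈ R', ∀ D ∈ R', y ∈ C → z ∈ C → y ∈ D → z ∈ D → C = D)
    (hcov : ∀ y z, CoversPair R' y z ↔ CoversPair R y z) :
    ∃ T : STS v, T.blocks = S.blocks \ R ∪ R' := by
  refine ⟨⟨S.blocks \ R ∪ R', ?_, ?_⟩, rfl⟩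
  · intro B hB
    rcases mem_union.1 hB with hB | hB
    exacts [S.card_blocks B (mem_sdiff.1 hB).1, hR'card B hB]
  intro y z hyz
  by_cases hyzR : CoversPair R y z
  · obtain ⟨C₀, hC₀, hyC₀, hzC₀⟩ := hyzR
    obtain ⟨C, hC, hyC, hzC⟩ := (hcov y z).2 ⟨C₀, hC₀, hyC₀, hzC₀⟩
    refine ⟨C, ⟨mem_union_right _ hC, hyC, hzC⟩, ?_⟩
    rintro D ⟨hD, hyD, hzD⟩
    rcases mem_union.1 hD with hD | hD
    · obtain ⟨hDS, hDR⟩ := mem_sdiff.1 hD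
      exact absurd (S.eq_of_mem_of_mem hDS (hR hC₀) hyz hyD hzD hyC₀ hzC₀ ▸ hC₀) hDR
    · exact hR'unique y z hyz D hD C hC hyD hzD hyC hzC
  · obtain ⟨B, ⟨hB, hyB, hzB⟩, hBunique⟩ := S.covers y z hyz
    have hBR : B ∉ R := fun hBR => hyzR ⟨B, hBR, hyB, hzB⟩
    refine ⟨B, ⟨mem_union_left _ (mem_sdiff.2 ⟨hB, hBR⟩), hyB, hzB⟩, ?_⟩
    rintro D ⟨hD, hyD, hzD⟩
    rcases mem_union.1 hD with hD | hD
    · exact hBunique D ⟨(mem_sdiff.1 hD).1, hyD, hzD⟩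
    · exact absurd ((hcov y z).1 ⟨D, hD, hyD, hzD⟩) hyzR

theorem exists_blocks_eq_sdiff_union_image {σ : Fin v → Fin v} (hσ : Function.Involutive σ)
    {R : Finset (Finset (Fin v))} (hR : R ⊆ S.blocks)
    (hRσ : ∀ C ∈ R, ∀ y ∈ C.image σ, ∀ z ∈ C.image σ, CoversPair R y z) :
    ∃ T : STS v, T.blocks = S.blocks \ R ∪ R.image (image σ) := by
  refine S.exists_blocks_eq_sdiff_union hR ?_ ?_ (coversPair_image_image_iff hσ hRσ)
  · intro B hB
    obtain ⟨C, hC, rfl⟩ := mem_image.1 hB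
    rw [card_image_of_injective C hσ.injective]
    exact S.card_blocks C (hR hC)
  · intro y z hyz C' hC' D' hD' hyC hzC hyD hzD
    obtain ⟨C, hC, rfl⟩ := mem_image.1 hC'
    obtain ⟨D, hD, rfl⟩ := mem_image.1 hD'
    rw [hσ.mem_finset_image_iff] at hyC hzC hyD hzD
    rw [S.eq_of_mem_of_mem (hR hC) (hR hD) (hσ.injective.ne hyz) hyC hzC hyD hzD]

theorem ne_of_cycleGraph_adj {a b y z : Fin v} (hab : a ≠ b) (h : (S.cycleGraph a b).Adj y z) :
    y ≠ a ∧ y ≠ b := by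
  obtain ⟨B, ⟨hB, haB, hbB⟩, -⟩ := S.covers a b hab
  have hyB : y ∉ B := by
    rw [cycleGraph, SimpleGraph.fromRel_adj] at h
    rcases h.2 with h | h
    exacts [(h.1 B hB haB hbB).1, (h.1 B hB haB hbB).2]
  exact ⟨fun h => hyB (h ▸ haB), fun h => hyB (h ▸ hbB)⟩

end STS

theorem ZMod.exists_fin_eq_two_mul_or {k : ℕ} [NeZero k] (i : ZMod (2 * k)) :
    ∃ j : Fin k, (((2 * (j : ℕ) : ℕ) : ZMod (2 * k)) = i ∨
      ((2 * (j : ℕ) + 1 : ℕ) : ZMod (2 * k)) = i) := by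
  have hi : i.val < 2 * k := ZMod.val_lt i
  refine ⟨⟨i.val / 2, by omega⟩, ?_⟩
  rcases Nat.mod_two_eq_zero_or_one i.val with h | h
  · left
    simp only [show 2 * (i.val / 2) = i.val by omega, ZMod.natCast_zmod_val]
  · right
    simp only [show 2 * (i.val / 2) + 1 = i.val by omega, ZMod.natCast_zmod_val]

section RemovedBlocks

variable {v k : ℕ} [NeZero k] (a b : Fin v) (x : ZMod (2 * k) → Fin v)

theorem coversPair_removedBlocks_left (i : ZMod (2 * k)) :
    CoversPair (removedBlocks a b k x) a (x i) := by
  obtain ⟨j, hj | hj⟩ := ZMod.exists_fin_eq_two_mul_or i <;>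
    refine ⟨_, mem_union_left _ (mem_image_of_mem _ (mem_univ j)), by simp, ?_⟩ <;>
    simp [hj]

theorem coversPair_removedBlocks_right (i : ZMod (2 * k)) :
    CoversPair (removedBlocks a b k x) b (x i) := by
  obtain ⟨j, hj | hj⟩ := ZMod.exists_fin_eq_two_mul_or (i - 1) <;>
    refine ⟨_, mem_union_right _ (mem_image_of_mem _ (mem_univ j)), by simp, ?_⟩
  · have : ((2 * (j : ℕ) + 1 : ℕ) : ZMod (2 * k)) = i := by
      push_cast at hj ⊢
      linear_combination hj
    simp [this]
  · have : ((2 * (j : ℕ) + 2 : ℕ) : ZMod (2 * k)) = i := by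
      push_cast at hj ⊢
      linear_combination hj
    simp [this]

theorem coversPair_removedBlocks_of_mem_image_swap (hxa : ∀ i, x i ≠ a) (hxb : ∀ i, x i ≠ b) :
    ∀ C ∈ removedBlocks a b k x, ∀ y ∈ C.image (Equiv.swap a b),
      ∀ z ∈ C.image (Equiv.swap a b), CoversPair (removedBlocks a b k x) y z := by
  have hfix (i : ZMod (2 * k)) : Equiv.swap a b (x i) = x i :=
    Equiv.swap_apply_of_ne_of_ne (hxa i) (hxb i)
  intro C hC
  rcases mem_union.1 hC with hC' | hC' <;> obtain ⟨j, -, rfl⟩ := mem_image.1 hC' <;>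
    simp only [image_insert, image_singleton, Equiv.swap_apply_left, Equiv.swap_apply_right, hfix]
  · exact .of_mem_triple (coversPair_removedBlocks_right a b x _)
      (coversPair_removedBlocks_right a b x _) ⟨_, hC, by simp, by simp⟩
  · exact .of_mem_triple (coversPair_removedBlocks_left a b x _)
      (coversPair_removedBlocks_left a b x _) ⟨_, hC, by simp, by simp⟩

end RemovedBlocks

/-- Switching a cycle of length `2k` in the cycle graph `C_ab` of a
Steiner triple system of order `v` again yields a Steiner triple system of order `v`. -/
theorem switchedBlocks_isSTS {v : ℕ} (S : STS v) (a b : Fin v) (k : ℕ)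
    (x : ZMod (2 * k) → Fin v) (hx : IsSwitchCycle S a b k x) :
    ∃ T : STS v, T.blocks = switchedBlocks S a b k x := by
  obtain ⟨hk, hab, -, hadj, hblocks⟩ := hx
  have : NeZero k := ⟨by omega⟩
  have hxab (i : ZMod (2 * k)) : x i ≠ a ∧ x i ≠ b := S.ne_of_cycleGraph_adj hab (hadj i)
  have hR : removedBlocks a b k x ⊆ S.blocks := by
    intro C hC
    rcases mem_union.1 hC with hC | hC <;> obtain ⟨j, -, rfl⟩ := mem_image.1 hC
    exacts [(hblocks j).1, (hblocks j).2]
  exact S.exists_blocks_eq_sdiff_union_image (Equiv.swap_apply_self a b) hR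
    (coversPair_removedBlocks_of_mem_image_swap a b x (fun i => (hxab i).1) fun i => (hxab i).2)
end

section
/- Let C be a Hamiltonian cycle (a cycle of length v−3) in some cycle graph of a Steiner triple system of order v. Then the STS(v) obtained by performing the cycle switch on C is isomorphic to the original system. -/
/-! In a Hamiltonian cycle of `C_ab` every point outside the block `{a, b, c}` is a cycle
vertex, so every block containing exactly one of `a`, `b` is one of the `2k` cycle blocks.
All other blocks contain both or neither of `a`, `b` and are fixed by the transposition
`(a b)`, so the cycle switch turns `S` into its image under `(a b)`. -/

namespace Finset

theorem image_swap_eq_self_of_mem_iff {α : Type*} [DecidableEq α] {s : Finset α} {a b : α}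
    (h : a ∈ s ↔ b ∈ s) : s.image (Equiv.swap a b) = s := by
  refine eq_of_subset_of_card_le ?_ (card_image_of_injective s (Equiv.injective _)).ge
  rw [image_subset_iff]
  intro p hp
  rcases eq_or_ne p a with rfl | hpa
  · rwa [Equiv.swap_apply_left, ← h]
  rcases eq_or_ne p b with rfl | hpb
  · rwa [Equiv.swap_apply_right, h]
  · rwa [Equiv.swap_apply_of_ne_of_ne hpa hpb]

theorem sdiff_union_image_eq_image {α : Type*} [DecidableEq α] {s r : Finset α} {f : α → α}
    (hrs : r ⊆ s) (hf : ∀ t ∈ s \ r, f t = t) : s \ r ∪ r.image f = s.image f := by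
  calc s \ r ∪ r.image f = (s \ r).image f ∪ r.image f := by
        rw [image_congr (g := id) hf, image_id]
    _ = s.image f := by rw [← image_union, sdiff_union_of_subset hrs]

end Finset

theorem ZMod.exists_eq_two_mul_or_two_mul_add_one {k : ℕ} (hk : k ≠ 0) (m : ZMod (2 * k)) :
    ∃ j : Fin k, ((2 * (j : ℕ) : ℕ) : ZMod (2 * k)) = m ∨
      ((2 * (j : ℕ) + 1 : ℕ) : ZMod (2 * k)) = m := by
  have : NeZero (2 * k) := ⟨by omega⟩
  have hm := ZMod.natCast_zmod_val m
  have hlt := ZMod.val_lt m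
  rcases Nat.even_or_odd' m.val with ⟨j, hj | hj⟩
  · exact ⟨⟨j, by omega⟩, .inl (by rw [Fin.val_mk, ← hj, hm])⟩
  · exact ⟨⟨j, by omega⟩, .inr (by rw [Fin.val_mk, ← hj, hm])⟩

namespace STS

variable {v : ℕ}

theorem eq_of_mem_of_mem_s2 (S : STS v) {p q : Fin v} (hpq : p ≠ q) {B C : Finset (Fin v)}
    (hB : B ∈ S.blocks) (hC : C ∈ S.blocks) (hpB : p ∈ B) (hqB : q ∈ B) (hpC : p ∈ C)
    (hqC : q ∈ C) : B = C :=
  (S.covers p q hpq).unique ⟨hB, hpB, hqB⟩ ⟨hC, hpC, hqC⟩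

theorem mem_of_mem_of_notMem (S : STS v) {p q : Fin v} {B₀ : Finset (Fin v)}
    (hB₀ : B₀ ∈ S.blocks) (hp₀ : p ∈ B₀) (hq₀ : q ∈ B₀) {R : Finset (Finset (Fin v))}
    (hR : ∀ y ∉ B₀, ∃ C ∈ R, C ∈ S.blocks ∧ p ∈ C ∧ y ∈ C) {B : Finset (Fin v)}
    (hB : B ∈ S.blocks) (hpB : p ∈ B) (hqB : q ∉ B) : B ∈ R := by
  obtain ⟨y, hyB, hyp⟩ := B.exists_mem_ne (by rw [S.card_blocks B hB]; norm_num) p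
  have hy₀ : y ∉ B₀ := fun hy =>
    hqB (S.eq_of_mem_of_mem_s2 hyp.symm hB hB₀ hpB hyB hp₀ hy ▸ hq₀)
  obtain ⟨C, hCR, hC, hpC, hyC⟩ := hR y hy₀
  rwa [S.eq_of_mem_of_mem_s2 hyp.symm hB hC hpB hyB hpC hyC]

theorem iso_of_blocks_eq_image {S T : STS v} (φ : Equiv.Perm (Fin v))
    (h : T.blocks = S.blocks.image (Finset.image φ)) : T.Iso S := by
  refine ⟨φ.symm, fun B => ?_⟩
  rw [h, Finset.mem_image]
  constructor
  · rintro ⟨B', hB', rfl⟩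
    rwa [Finset.image_image, φ.symm_comp_self, Finset.image_id]
  · exact fun hB => ⟨_, hB, by rw [Finset.image_image, φ.self_comp_symm, Finset.image_id]⟩

end STS

namespace IsSwitchCycle

variable {v : ℕ} {S : STS v} {a b : Fin v} {k : ℕ} {x : ZMod (2 * k) → Fin v}

theorem k_ne_zero (hx : IsSwitchCycle S a b k x) : k ≠ 0 := by
  have := hx.1
  omega

theorem removedBlocks_subset (hx : IsSwitchCycle S a b k x) :
    removedBlocks a b k x ⊆ S.blocks := by
  simp only [removedBlocks, Finset.union_subset_iff, Finset.image_subset_iff]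
  exact ⟨fun j _ => (hx.2.2.2.2 j).1, fun j _ => (hx.2.2.2.2 j).2⟩

theorem notMem_of_mem (hx : IsSwitchCycle S a b k x) {B₀ : Finset (Fin v)}
    (hB₀ : B₀ ∈ S.blocks) (ha : a ∈ B₀) (hb : b ∈ B₀) (i : ZMod (2 * k)) : x i ∉ B₀ := by
  have hadj := hx.2.2.2.1 i
  rw [STS.cycleGraph, SimpleGraph.fromRel_adj] at hadj
  obtain ⟨-, h | h⟩ := hadj
  exacts [(h.1 _ hB₀ ha hb).1, (h.1 _ hB₀ ha hb).2]

theorem exists_eq_of_notMem (hx : IsSwitchCycle S a b k x) (hham : 2 * k = v - 3)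
    {B₀ : Finset (Fin v)} (hB₀ : B₀ ∈ S.blocks) (ha : a ∈ B₀) (hb : b ∈ B₀) :
    ∀ y ∉ B₀, ∃ i, x i = y := by
  have : NeZero (2 * k) := ⟨by have := hx.k_ne_zero; omega⟩
  have hrange : Finset.univ.image x = B₀ᶜ := by
    refine Finset.eq_of_subset_of_card_le ?_ ?_
    · rw [Finset.image_subset_iff]
      exact fun i _ => Finset.mem_compl.2 (hx.notMem_of_mem hB₀ ha hb i)
    · rw [Finset.card_image_of_injective _ hx.2.2.1, Finset.card_univ, ZMod.card,
        Finset.card_compl, S.card_blocks _ hB₀, Fintype.card_fin, hham]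
  intro y hy
  have hy' : y ∈ Finset.univ.image x := hrange ▸ Finset.mem_compl.2 hy
  simpa using hy'

theorem exists_mem_removedBlocks_left (hx : IsSwitchCycle S a b k x) (i : ZMod (2 * k)) :
    ∃ C ∈ removedBlocks a b k x, C ∈ S.blocks ∧ a ∈ C ∧ x i ∈ C := by
  obtain ⟨j, hj | hj⟩ := ZMod.exists_eq_two_mul_or_two_mul_add_one hx.k_ne_zero i
  all_goals
    refine ⟨_, Finset.mem_union_left _ (Finset.mem_image_of_mem _ (Finset.mem_univ j)),
      (hx.2.2.2.2 j).1, by simp, ?_⟩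
    simp [hj]

theorem exists_mem_removedBlocks_right (hx : IsSwitchCycle S a b k x) (i : ZMod (2 * k)) :
    ∃ C ∈ removedBlocks a b k x, C ∈ S.blocks ∧ b ∈ C ∧ x i ∈ C := by
  -- the `b`-blocks `{b, x (2j+1), x (2j+2)}` are the `a`-blocks shifted by one position
  obtain ⟨j, hj | hj⟩ := ZMod.exists_eq_two_mul_or_two_mul_add_one hx.k_ne_zero (i - 1)
  all_goals
    refine ⟨_, Finset.mem_union_right _ (Finset.mem_image_of_mem _ (Finset.mem_univ j)),
      (hx.2.2.2.2 j).2, by simp, ?_⟩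
    push_cast at hj ⊢
  · have hi : 2 * ((j : ℕ) : ZMod (2 * k)) + 1 = i := by linear_combination hj
    simp [hi]
  · have hi : 2 * ((j : ℕ) : ZMod (2 * k)) + 2 = i := by linear_combination hj
    simp [hi]

theorem mem_iff_mem_of_notMem_removedBlocks (hx : IsSwitchCycle S a b k x)
    (hham : 2 * k = v - 3) {B : Finset (Fin v)} (hB : B ∈ S.blocks)
    (hBR : B ∉ removedBlocks a b k x) : a ∈ B ↔ b ∈ B := by
  obtain ⟨B₀, ⟨hB₀, ha₀, hb₀⟩, -⟩ := S.covers a b hx.2.1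
  have hcover := hx.exists_eq_of_notMem hham hB₀ ha₀ hb₀
  constructor
  · refine fun ha => by_contra fun hb => hBR (S.mem_of_mem_of_notMem hB₀ ha₀ hb₀ ?_ hB ha hb)
    intro y hy
    obtain ⟨i, rfl⟩ := hcover y hy
    exact hx.exists_mem_removedBlocks_left i
  · refine fun hb => by_contra fun ha => hBR (S.mem_of_mem_of_notMem hB₀ hb₀ ha₀ ?_ hB hb ha)
    intro y hy
    obtain ⟨i, rfl⟩ := hcover y hy
    exact hx.exists_mem_removedBlocks_right i

theorem switchedBlocks_eq_image_swap (hx : IsSwitchCycle S a b k x) (hham : 2 * k = v - 3) :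
    switchedBlocks S a b k x = S.blocks.image (Finset.image (Equiv.swap a b)) :=
  Finset.sdiff_union_image_eq_image hx.removedBlocks_subset fun _ hB =>
    Finset.image_swap_eq_self_of_mem_iff <|
      hx.mem_iff_mem_of_notMem_removedBlocks hham (Finset.mem_sdiff.1 hB).1
        (Finset.mem_sdiff.1 hB).2

end IsSwitchCycle

/-- Switching a Hamiltonian cycle (a cycle of length `v - 3`) in some
cycle graph of a Steiner triple system of order `v` yields a system isomorphic to the
original one. -/
theorem switch_hamiltonian_iso {v : ℕ} (S T : STS v) (a b : Fin v) (k : ℕ)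
    (x : ZMod (2 * k) → Fin v) (hx : IsSwitchCycle S a b k x) (hham : 2 * k = v - 3)
    (hT : T.blocks = switchedBlocks S a b k x) :
    T.Iso S :=
  STS.iso_of_blocks_eq_image (Equiv.swap a b) <|
    hT.trans (hx.switchedBlocks_eq_image_swap hham)
end

section
/- Let v ≥ 13 and let u be an isomorphism class of Steiner triple systems of order v. Then the connected component of u in the switching graph Sw_{v−7}(v) is a subgraph of (in particular, its vertex set is contained in that of) the connected component of u in Sw_4(v); and the connected component of u in Sw_{v−9}(v) is a subgraph of the connected component of u in Sw_6(v). -/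
lemma aux_triple_swap {α : Type*} [DecidableEq α] (p q r : α) :
    ({p, q, r} : Finset α) = {p, r, q} :=
  congrArg (insert p) (Finset.pair_comm q r)

lemma aux_pair_card_le {α : Type*} [DecidableEq α] (s t : α) :
    ({s, t} : Finset α).card ≤ 2 :=
  (Finset.card_insert_le _ _).trans (by rw [Finset.card_singleton])

lemma aux_triple_ne {α : Type*} [DecidableEq α] {p q r : α}
    (h : ({p, q, r} : Finset α).card = 3) : p ≠ q ∧ p ≠ r ∧ q ≠ r := by
  refine ⟨?_, ?_, ?_⟩
  · rintro rfl
    have hsub : ({p, p, r} : Finset α) ⊆ ({p, r} : Finset α) := by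
      intro t ht; simp at ht ⊢; tauto
    have := (Finset.card_le_card hsub).trans (aux_pair_card_le p r); omega
  · rintro rfl
    have hsub : ({p, q, p} : Finset α) ⊆ ({p, q} : Finset α) := by
      intro t ht; simp at ht ⊢; tauto
    have := (Finset.card_le_card hsub).trans (aux_pair_card_le p q); omega
  · rintro rfl
    have hsub : ({p, q, q} : Finset α) ⊆ ({p, q} : Finset α) := by
      intro t ht; simp at ht ⊢; tauto
    have := (Finset.card_le_card hsub).trans (aux_pair_card_le p q); omega

lemma aux_mem_image_invol {α : Type*} [DecidableEq α] {e : α → α}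
    (he : ∀ t, e (e t) = t) (A : Finset α) (t : α) : t ∈ A.image e ↔ e t ∈ A := by
  constructor
  · intro h; obtain ⟨s, hs, rfl⟩ := Finset.mem_image.mp h; rw [he]; exact hs
  · intro h; exact Finset.mem_image.mpr ⟨e t, h, he t⟩

lemma STS.block_third {v : ℕ} (S : STS v) {B : Finset (Fin v)} (hB : B ∈ S.blocks)
    {p q : Fin v} (hp : p ∈ B) (hq : q ∈ B) (hpq : p ≠ q) :
    ∃ r, r ≠ p ∧ r ≠ q ∧ B = {p, q, r} := by
  have hsub : ({p, q} : Finset (Fin v)) ⊆ B := by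
    intro t ht
    rcases Finset.mem_insert.mp ht with rfl | ht
    · exact hp
    · rw [Finset.mem_singleton] at ht; subst ht; exact hq
  have hpqcard : ({p, q} : Finset (Fin v)).card = 2 := Finset.card_pair hpq
  have h1 : (B \ {p, q}).card = 1 := by
    rw [Finset.card_sdiff_of_subset hsub, S.card_blocks B hB, hpqcard]
  obtain ⟨r, hr⟩ := Finset.card_eq_one.mp h1
  have hrB : r ∈ B \ {p, q} := by rw [hr]; exact Finset.mem_singleton_self r
  rw [Finset.mem_sdiff] at hrB
  obtain ⟨hrB, hrpq⟩ := hrB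
  simp only [Finset.mem_insert, Finset.mem_singleton, not_or] at hrpq
  refine ⟨r, hrpq.1, hrpq.2, ?_⟩
  ext t
  simp only [Finset.mem_insert, Finset.mem_singleton]
  constructor
  · intro htB
    by_cases h1' : t = p
    · tauto
    by_cases h2' : t = q
    · tauto
    have : t ∈ B \ {p, q} := by
      rw [Finset.mem_sdiff]
      exact ⟨htB, by simp [h1', h2']⟩
    rw [hr, Finset.mem_singleton] at this; tauto
  · rintro (rfl | rfl | rfl)
    · exact hp
    · exact hq
    · exact hrB

def STS.map {v : ℕ} (S : STS v) (σ : Equiv.Perm (Fin v)) : STS v where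
  blocks := S.blocks.image (Finset.image σ)
  card_blocks := by
    intro B hB
    obtain ⟨C, hC, rfl⟩ := Finset.mem_image.mp hB
    rw [Finset.card_image_of_injective _ σ.injective]
    exact S.card_blocks C hC
  covers := by
    intro p q hpq
    have hpq' : σ.symm p ≠ σ.symm q := fun h => hpq (by simpa using congrArg σ h)
    obtain ⟨B, ⟨hB, hpB, hqB⟩, hu⟩ := S.covers _ _ hpq'
    refine ⟨B.image σ, ⟨Finset.mem_image_of_mem _ hB, ?_, ?_⟩, ?_⟩
    · exact Finset.mem_image.mpr ⟨σ.symm p, hpB, σ.apply_symm_apply p⟩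
    · exact Finset.mem_image.mpr ⟨σ.symm q, hqB, σ.apply_symm_apply q⟩
    · rintro C ⟨hC, hpC, hqC⟩
      obtain ⟨D, hD, rfl⟩ := Finset.mem_image.mp hC
      have h1 : σ.symm p ∈ D := by
        obtain ⟨s, hs, hs'⟩ := Finset.mem_image.mp hpC
        rwa [← hs', Equiv.symm_apply_apply]
      have h2 : σ.symm q ∈ D := by
        obtain ⟨s, hs, hs'⟩ := Finset.mem_image.mp hqC
        rwa [← hs', Equiv.symm_apply_apply]
      rw [hu D ⟨hD, h1, h2⟩]
lemma core {v : ℕ} (S S' : STS v) (a b : Fin v) (k k' : ℕ)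
    (x : ZMod (2 * k) → Fin v) (y : ZMod (2 * k') → Fin v)
    (hy : IsSwitchCycle S a b k' y)
    (hS' : S'.blocks = switchedBlocks S a b k x)
    (hsub : removedBlocks a b k x ⊆ S.blocks)
    (hsub' : removedBlocks a b k' y ⊆ S.blocks)
    (hdisj : ∀ B, B ∈ removedBlocks a b k x → B ∈ removedBlocks a b k' y → False)
    (hcover : ∀ B ∈ S.blocks, a ∈ B ∨ b ∈ B →
      (a ∈ B ∧ b ∈ B) ∨ B ∈ removedBlocks a b k x ∨ B ∈ removedBlocks a b k' y) :
    ∃ S'' : STS v, SwitchStep {2 * k'} S S'' ∧ S''.Iso S' := by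
  obtain ⟨-, hab, -, -, -⟩ := id hy
  have hσσ : ∀ t, Equiv.swap a b (Equiv.swap a b t) = t := fun t => Equiv.swap_apply_self a b t
  have hΦΦ : ∀ B : Finset (Fin v), (B.image (Equiv.swap a b)).image (Equiv.swap a b) = B := by
    intro B
    rw [Finset.image_image]
    have h : ((Equiv.swap a b : Fin v → Fin v) ∘ (Equiv.swap a b : Fin v → Fin v)) = id :=
      funext hσσ
    rw [h, Finset.image_id]
  have hmemΦ : ∀ (A : Finset (Finset (Fin v))) (B : Finset (Fin v)),
      B ∈ A.image (Finset.image (Equiv.swap a b)) ↔ B.image (Equiv.swap a b) ∈ A :=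
    fun A B => aux_mem_image_invol hΦΦ A B
  have huniq : ∀ (p q : Fin v), p ≠ q → ∀ B ∈ S.blocks, p ∈ B → q ∈ B →
      ∀ B' ∈ S.blocks, p ∈ B' → q ∈ B' → B = B' := by
    intro p q hpq B hB h1 h2 B' hB' h3 h4
    obtain ⟨C, -, hu⟩ := S.covers p q hpq
    rw [hu B ⟨hB, h1, h2⟩, hu B' ⟨hB', h3, h4⟩]
  have hfixAB : ∀ B ∈ S.blocks, a ∈ B → b ∈ B → B.image (Equiv.swap a b) = B := by
    intro B hB haB hbB
    obtain ⟨c, hca, hcb, rfl⟩ := S.block_third hB haB hbB hab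
    rw [Finset.image_insert, Finset.image_insert, Finset.image_singleton,
      Equiv.swap_apply_left, Equiv.swap_apply_right,
      Equiv.swap_apply_of_ne_of_ne hca hcb]
    exact Finset.insert_comm b a {c}
  have hfixN : ∀ B : Finset (Fin v), a ∉ B → b ∉ B → B.image (Equiv.swap a b) = B := by
    intro B haB hbB
    ext t
    rw [aux_mem_image_invol hσσ]
    by_cases h1 : t = a
    · subst h1; rw [Equiv.swap_apply_left]; exact iff_of_false hbB haB
    by_cases h2 : t = b
    · subst h2; rw [Equiv.swap_apply_right]; exact iff_of_false haB hbB
    · rw [Equiv.swap_apply_of_ne_of_ne h1 h2]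
  have hL : ∀ B ∈ S.blocks, B ∉ removedBlocks a b k x → B ∉ removedBlocks a b k' y →
      B.image (Equiv.swap a b) = B := by
    intro B hB h1 h2
    by_cases hor : a ∈ B ∨ b ∈ B
    · rcases hcover B hB hor with ⟨h3, h4⟩ | h | h
      · exact hfixAB B hB h3 h4
      · exact absurd h h1
      · exact absurd h h2
    · push_neg at hor; exact hfixN B hor.1 hor.2
  refine ⟨S'.map (Equiv.swap a b), ⟨a, b, k', y, rfl, hy, ?_⟩,
    Equiv.swap a b, fun B => hmemΦ S'.blocks B⟩
  show S'.blocks.image (Finset.image (Equiv.swap a b)) = switchedBlocks S a b k' y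
  rw [hS']
  ext C
  rw [hmemΦ]
  unfold switchedBlocks
  simp only [Finset.mem_union, Finset.mem_sdiff, hmemΦ, hΦΦ]
  constructor
  · rintro (⟨hmem, hnb⟩ | hbig)
    · by_cases hs : C.image (Equiv.swap a b) ∈ removedBlocks a b k' y
      · exact Or.inr hs
      · have hfix := hL _ hmem hnb hs
        have hCD : C = C.image (Equiv.swap a b) := (hΦΦ C).symm.trans hfix
        exact Or.inl ⟨by rw [hCD]; exact hmem, by rw [hCD]; exact hs⟩
    · exact Or.inl ⟨hsub hbig, fun h => hdisj C hbig h⟩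
  · rintro (⟨hmem, hns⟩ | hsml)
    · by_cases hb' : C ∈ removedBlocks a b k x
      · exact Or.inr hb'
      · have hfix := hL C hmem hb' hns
        exact Or.inl ⟨by rw [hfix]; exact hmem, by rw [hfix]; exact hb'⟩
    · exact Or.inl ⟨hsub' hsml, fun h => hdisj _ h hsml⟩
lemma key {v : ℕ} (m : ℕ) (hm : m = 4 ∨ m = 6) (hv : m + 7 ≤ v) (S S' : STS v)
    (h : SwitchStep {v - (m + 3)} S S') :
    ∃ S'' : STS v, SwitchStep {m} S S'' ∧ S''.Iso S' := by
  obtain ⟨a, b, k, x, hmem, hcyc, hS'⟩ := h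
  have h2k : 2 * k = v - (m + 3) := hmem
  obtain ⟨hk2, hab, hxinj, hadj, hblk⟩ := id hcyc
  have hv' : v = 2 * k + m + 3 := by omega
  haveI : NeZero (2 * k) := ⟨by omega⟩
  obtain ⟨B0, ⟨hB0m, haB0, hbB0⟩, hB0u⟩ := S.covers a b hab
  have hB0u' : ∀ B ∈ S.blocks, a ∈ B → b ∈ B → B = B0 :=
    fun B h1 h2 h3 => hB0u B ⟨h1, h2, h3⟩
  have hane : ∀ z, z ∉ B0 → a ≠ z ∧ b ≠ z :=
    fun z hz => ⟨fun h => hz (h ▸ haB0), fun h => hz (h ▸ hbB0)⟩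
  have huniq : ∀ (p q : Fin v), p ≠ q → ∀ B ∈ S.blocks, p ∈ B → q ∈ B →
      ∀ B' ∈ S.blocks, p ∈ B' → q ∈ B' → B = B' := by
    intro p q hpq B hB h1 h2 B' hB' h3 h4
    obtain ⟨C, -, hu⟩ := S.covers p q hpq
    rw [hu B ⟨hB, h1, h2⟩, hu B' ⟨hB', h3, h4⟩]
  have hex : ∀ c : Fin v, c ∈ B0 → ∀ z : Fin v, ∃ w : Fin v, z ∉ B0 →
      ({c, z, w} : Finset (Fin v)) ∈ S.blocks ∧ w ∉ B0 ∧ w ≠ z := by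
    intro c hc z
    by_cases hz : z ∉ B0
    · have hcz : c ≠ z := fun h => hz (h ▸ hc)
      obtain ⟨B, ⟨hB, hcB, hzB⟩, -⟩ := S.covers c z hcz
      obtain ⟨w, hwc, hwz, rfl⟩ := S.block_third hB hcB hzB hcz
      refine ⟨w, fun _ => ⟨hB, ?_, hwz⟩⟩
      intro hwB0
      have hBB0 : ({c, z, w} : Finset (Fin v)) = B0 :=
        huniq c w (Ne.symm hwc) _ hB (by simp) (by simp) B0 hB0m hc hwB0
      exact hz (hBB0 ▸ (by simp : z ∈ ({c, z, w} : Finset (Fin v))))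
    · exact ⟨z, fun h => absurd h hz⟩
  choose f hf using hex a haB0
  choose g hg using hex b hbB0
  have hfu : ∀ z w, z ∉ B0 → ({a, z, w} : Finset (Fin v)) ∈ S.blocks → w = f z := by
    intro z w hz hw
    obtain ⟨hblk', hfB0, hfz⟩ := hf z hz
    have heq : ({a, z, w} : Finset (Fin v)) = {a, z, f z} :=
      huniq a z (hane z hz).1 _ hw (by simp) (by simp) _ hblk' (by simp) (by simp)
    have hw3 : w ∈ ({a, z, f z} : Finset (Fin v)) :=
      heq ▸ (by simp : w ∈ ({a, z, w} : Finset (Fin v)))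
    obtain ⟨n1, n2, n3⟩ := aux_triple_ne (S.card_blocks _ hw)
    simp only [Finset.mem_insert, Finset.mem_singleton] at hw3
    rcases hw3 with h | h | h
    · exact absurd h.symm n2
    · exact absurd h.symm n3
    · exact h
  have hgu : ∀ z w, z ∉ B0 → ({b, z, w} : Finset (Fin v)) ∈ S.blocks → w = g z := by
    intro z w hz hw
    obtain ⟨hblk', hgB0, hgz⟩ := hg z hz
    have heq : ({b, z, w} : Finset (Fin v)) = {b, z, g z} :=
      huniq b z (hane z hz).2 _ hw (by simp) (by simp) _ hblk' (by simp) (by simp)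
    have hw3 : w ∈ ({b, z, g z} : Finset (Fin v)) :=
      heq ▸ (by simp : w ∈ ({b, z, w} : Finset (Fin v)))
    obtain ⟨n1, n2, n3⟩ := aux_triple_ne (S.card_blocks _ hw)
    simp only [Finset.mem_insert, Finset.mem_singleton] at hw3
    rcases hw3 with h | h | h
    · exact absurd h.symm n2
    · exact absurd h.symm n3
    · exact h
  have hfinv : ∀ z, z ∉ B0 → f (f z) = z := by
    intro z hz
    obtain ⟨hblk', hfB0, hfz⟩ := hf z hz
    have h2 : ({a, f z, z} : Finset (Fin v)) ∈ S.blocks := by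
      rw [aux_triple_swap]; exact hblk'
    exact (hfu (f z) z hfB0 h2).symm
  have hginv : ∀ z, z ∉ B0 → g (g z) = z := by
    intro z hz
    obtain ⟨hblk', hgB0, hgz⟩ := hg z hz
    have h2 : ({b, g z, z} : Finset (Fin v)) ∈ S.blocks := by
      rw [aux_triple_swap]; exact hblk'
    exact (hgu (g z) z hgB0 h2).symm
  have hfgne : ∀ z, z ∉ B0 → f z ≠ g z := by
    intro z hz heq
    obtain ⟨hfb, hfB0, hfz⟩ := hf z hz
    obtain ⟨hgb, hgB0, hgz⟩ := hg z hz
    rw [heq] at hfb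
    have h2 : ({a, z, g z} : Finset (Fin v)) = {b, z, g z} :=
      huniq z (g z) (Ne.symm hgz) _ hfb (by simp) (by simp) _ hgb (by simp) (by simp)
    have ha' : a ∈ ({b, z, g z} : Finset (Fin v)) :=
      h2 ▸ (by simp : a ∈ ({a, z, g z} : Finset (Fin v)))
    simp only [Finset.mem_insert, Finset.mem_singleton] at ha'
    rcases ha' with h | h | h
    · exact hab h
    · exact (hane z hz).1 h
    · exact (hane (g z) hgB0).1 h
  have hxB0 : ∀ i, x i ∉ B0 := by
    intro i
    have h := hadj i
    simp only [STS.cycleGraph, SimpleGraph.fromRel_adj] at h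
    rcases h with ⟨-, h | h⟩
    · exact (h.1 B0 hB0m haB0 hbB0).1
    · exact (h.1 B0 hB0m haB0 hbB0).2
  have hfx : ∀ j : Fin k, f (x ((2 * (j : ℕ) : ℕ) : ZMod (2 * k)))
      = x ((2 * (j : ℕ) + 1 : ℕ) : ZMod (2 * k)) :=
    fun j => (hfu _ _ (hxB0 _) (hblk j).1).symm
  have hgx : ∀ j : Fin k, g (x ((2 * (j : ℕ) + 1 : ℕ) : ZMod (2 * k)))
      = x ((2 * (j : ℕ) + 2 : ℕ) : ZMod (2 * k)) :=
    fun j => (hgu _ _ (hxB0 _) (hblk j).2).symm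
  have hfx' : ∀ j : Fin k, f (x ((2 * (j : ℕ) + 1 : ℕ) : ZMod (2 * k)))
      = x ((2 * (j : ℕ) : ℕ) : ZMod (2 * k)) := by
    intro j; rw [← hfx j, hfinv _ (hxB0 _)]
  have hgx' : ∀ j : Fin k, g (x ((2 * (j : ℕ) + 2 : ℕ) : ZMod (2 * k)))
      = x ((2 * (j : ℕ) + 1 : ℕ) : ZMod (2 * k)) := by
    intro j; rw [← hgx j, hginv _ (hxB0 _)]
  have helpA : ∀ i : ZMod (2 * k), ∃ j : Fin k,
      i = ((2 * (j : ℕ) : ℕ) : ZMod (2 * k)) ∨ i = ((2 * (j : ℕ) + 1 : ℕ) : ZMod (2 * k)) := by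
    intro i
    have hval : i = ((i.val : ℕ) : ZMod (2 * k)) := (ZMod.natCast_rightInverse i).symm
    have hlt := i.val_lt
    rcases Nat.mod_two_eq_zero_or_one i.val with h | h
    · exact ⟨⟨i.val / 2, by omega⟩, Or.inl (hval.trans (congrArg _ (by simp only [Fin.val_mk]; omega)))⟩
    · exact ⟨⟨i.val / 2, by omega⟩, Or.inr (hval.trans (congrArg _ (by simp only [Fin.val_mk]; omega)))⟩
  have helpB : ∀ j : Fin k, ∃ j' : Fin k,
      ((2 * (j' : ℕ) + 2 : ℕ) : ZMod (2 * k)) = ((2 * (j : ℕ) : ℕ) : ZMod (2 * k)) := by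
    intro j
    rcases Nat.eq_zero_or_pos (j : ℕ) with h0 | hpos
    · refine ⟨⟨k - 1, by omega⟩, ?_⟩
      have h1 : (2 * ((⟨k - 1, by omega⟩ : Fin k) : ℕ) + 2 : ℕ) = 2 * k := by
        simp only [Fin.val_mk]; omega
      rw [h1, h0, ZMod.natCast_self]
      norm_num
    · have hjlt := j.isLt
      refine ⟨⟨(j : ℕ) - 1, by omega⟩, congrArg _ ?_⟩
      simp only [Fin.val_mk]; omega
  have hRbigA : ∀ j : Fin k, ({a, x ((2 * (j : ℕ) : ℕ) : ZMod (2 * k)),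
      x ((2 * (j : ℕ) + 1 : ℕ) : ZMod (2 * k))} : Finset (Fin v)) ∈ removedBlocks a b k x :=
    fun j => Finset.mem_union_left _ (Finset.mem_image_of_mem _ (Finset.mem_univ j))
  have hRbigB : ∀ j : Fin k, ({b, x ((2 * (j : ℕ) + 1 : ℕ) : ZMod (2 * k)),
      x ((2 * (j : ℕ) + 2 : ℕ) : ZMod (2 * k))} : Finset (Fin v)) ∈ removedBlocks a b k x :=
    fun j => Finset.mem_union_right _ (Finset.mem_image_of_mem _ (Finset.mem_univ j))
  have hRbigE : ∀ B ∈ removedBlocks a b k x,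
      (∃ j : Fin k, B = {a, x ((2 * (j : ℕ) : ℕ) : ZMod (2 * k)),
        x ((2 * (j : ℕ) + 1 : ℕ) : ZMod (2 * k))}) ∨
      (∃ j : Fin k, B = {b, x ((2 * (j : ℕ) + 1 : ℕ) : ZMod (2 * k)),
        x ((2 * (j : ℕ) + 2 : ℕ) : ZMod (2 * k))}) := by
    intro B hB
    rw [removedBlocks, Finset.mem_union] at hB
    rcases hB with hB | hB
    · left; obtain ⟨j, -, hj⟩ := Finset.mem_image.mp hB; exact ⟨j, hj.symm⟩
    · right; obtain ⟨j, -, hj⟩ := Finset.mem_image.mp hB; exact ⟨j, hj.symm⟩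
  have hsubBig : removedBlocks a b k x ⊆ S.blocks := by
    intro B hB
    rcases hRbigE B hB with ⟨j, rfl⟩ | ⟨j, rfl⟩
    · exact (hblk j).1
    · exact (hblk j).2
  have hAmem : ∀ i : ZMod (2 * k),
      ({a, x i, f (x i)} : Finset (Fin v)) ∈ removedBlocks a b k x := by
    intro i
    obtain ⟨j, rfl | rfl⟩ := helpA i
    · rw [hfx j]; exact hRbigA j
    · rw [hfx' j, aux_triple_swap]; exact hRbigA j
  have hBmem : ∀ i : ZMod (2 * k),
      ({b, x i, g (x i)} : Finset (Fin v)) ∈ removedBlocks a b k x := by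
    intro i
    obtain ⟨j, rfl | rfl⟩ := helpA i
    · obtain ⟨j', hj'⟩ := helpB j
      rw [← hj', hgx' j', aux_triple_swap]; exact hRbigB j'
    · rw [hgx j]; exact hRbigB j
  have hfRng : ∀ i : ZMod (2 * k), ∃ i', f (x i) = x i' := by
    intro i; obtain ⟨j, rfl | rfl⟩ := helpA i
    · exact ⟨_, hfx j⟩
    · exact ⟨_, hfx' j⟩
  have hgRng : ∀ i : ZMod (2 * k), ∃ i', g (x i) = x i' := by
    intro i; obtain ⟨j, rfl | rfl⟩ := helpA i
    · obtain ⟨j', hj'⟩ := helpB j; rw [← hj']; exact ⟨_, hgx' j'⟩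
    · exact ⟨_, hgx j⟩
  set R : Finset (Fin v) := Finset.univ \ (B0 ∪ Finset.univ.image x) with hRdef
  have hmemR : ∀ z, z ∈ R ↔ z ∉ B0 ∧ ∀ i, x i ≠ z := by
    intro z
    rw [hRdef]
    simp [Finset.mem_sdiff, Finset.mem_union, Finset.mem_image, not_or]
  have hR0 : ∀ z ∈ R, z ∉ B0 := fun z hz => ((hmemR z).mp hz).1
  have hRx : ∀ z ∈ R, ∀ i, x i ≠ z := fun z hz => ((hmemR z).mp hz).2
  have hfR : ∀ z ∈ R, f z ∈ R := by
    intro z hz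
    rw [hmemR]
    refine ⟨(hf z (hR0 z hz)).2.1, ?_⟩
    intro i hi
    obtain ⟨i', hi'⟩ := hfRng i
    refine hRx z hz i' ?_
    rw [← hi', hi, hfinv z (hR0 z hz)]
  have hgR : ∀ z ∈ R, g z ∈ R := by
    intro z hz
    rw [hmemR]
    refine ⟨(hg z (hR0 z hz)).2.1, ?_⟩
    intro i hi
    obtain ⟨i', hi'⟩ := hgRng i
    refine hRx z hz i' ?_
    rw [← hi', hi, hginv z (hR0 z hz)]
  have hcardR : R.card = m := by
    have hcardB0 : B0.card = 3 := S.card_blocks _ hB0m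
    have hcardRng : (Finset.univ.image x).card = 2 * k := by
      rw [Finset.card_image_of_injective _ hxinj, Finset.card_univ, ZMod.card]
    have hdisjB0 : Disjoint B0 (Finset.univ.image x) := by
      rw [Finset.disjoint_right]
      intro z hz
      obtain ⟨i, -, rfl⟩ := Finset.mem_image.mp hz
      exact hxB0 i
    rw [hRdef, Finset.card_sdiff_of_subset (Finset.subset_univ _),
      Finset.card_union_of_disjoint hdisjB0, hcardB0, hcardRng,
      Finset.card_univ, Fintype.card_fin]
    omega
  have hAdjF : ∀ z ∈ R, (S.cycleGraph a b).Adj z (f z) := by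
    intro z hz
    have hz0 := hR0 z hz
    simp only [STS.cycleGraph, SimpleGraph.fromRel_adj]
    refine ⟨Ne.symm (hf z hz0).2.2, Or.inl ⟨?_, Or.inl (hf z hz0).1⟩⟩
    intro B hB haB hbB
    rw [hB0u' B hB haB hbB]
    exact ⟨hz0, (hf z hz0).2.1⟩
  have hAdjG : ∀ z ∈ R, (S.cycleGraph a b).Adj z (g z) := by
    intro z hz
    have hz0 := hR0 z hz
    simp only [STS.cycleGraph, SimpleGraph.fromRel_adj]
    refine ⟨Ne.symm (hg z hz0).2.2, Or.inl ⟨?_, Or.inr (hg z hz0).1⟩⟩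
    intro B hB haB hbB
    rw [hB0u' B hB haB hbB]
    exact ⟨hz0, (hg z hz0).2.1⟩
  clear hmem hcyc hex
  rcases hm with rfl | rfl
  · -- m = 4
    have hR4 : R.card = 4 := hcardR
    obtain ⟨y0, hy0⟩ : R.Nonempty := Finset.card_pos.mp (by omega)
    set y1 := f y0 with hy1d
    have hy1 : y1 ∈ R := hfR y0 hy0
    set y2 := g y1 with hy2d
    have hy2 : y2 ∈ R := hgR y1 hy1
    set y3 := f y2 with hy3d
    have hy3 : y3 ∈ R := hfR y2 hy2
    have hfy0 : f y0 = y1 := rfl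
    have hfy1 : f y1 = y0 := by rw [hy1d, hfinv y0 (hR0 y0 hy0)]
    have hgy1 : g y1 = y2 := rfl
    have hgy2 : g y2 = y1 := by rw [hy2d, hginv y1 (hR0 y1 hy1)]
    have hfy2 : f y2 = y3 := rfl
    have hfy3 : f y3 = y2 := by rw [hy3d, hfinv y2 (hR0 y2 hy2)]
    have n10 : y1 ≠ y0 := (hf y0 (hR0 y0 hy0)).2.2
    have n21 : y2 ≠ y1 := (hg y1 (hR0 y1 hy1)).2.2
    have n20 : y2 ≠ y0 := fun h => hfgne y1 (hR0 y1 hy1) (by rw [hfy1, hgy1, h])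
    have n32 : y3 ≠ y2 := (hf y2 (hR0 y2 hy2)).2.2
    have n31 : y3 ≠ y1 := fun h => n20 (by rw [← hfy3, h, hfy1])
    have n30 : y3 ≠ y0 := fun h => n21 (by rw [← hfy3, h, hfy0])
    have c4 : ({y0, y1, y2, y3} : Finset (Fin v)).card = 4 := by
      rw [Finset.card_insert_of_notMem (by simp [n10.symm, n20.symm, n30.symm]),
        Finset.card_insert_of_notMem (by simp [n21.symm, n31.symm]),
        Finset.card_insert_of_notMem (by simp [n32.symm]),
        Finset.card_singleton]
    have hRset : R = {y0, y1, y2, y3} := by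
      symm
      apply Finset.eq_of_subset_of_card_le
      · intro t ht
        simp only [Finset.mem_insert, Finset.mem_singleton] at ht
        rcases ht with rfl | rfl | rfl | rfl
        exacts [hy0, hy1, hy2, hy3]
      · rw [hR4, c4]
    have hgy3 : g y3 = y0 := by
      have h3 : g y3 ∈ R := hgR y3 hy3
      rw [hRset] at h3
      simp only [Finset.mem_insert, Finset.mem_singleton] at h3
      rcases h3 with h | h | h | h
      · exact h
      · exact absurd (by rw [← hginv y3 (hR0 y3 hy3), h, hgy1] : y3 = y2) n32
      · exact absurd (by rw [← hginv y3 (hR0 y3 hy3), h, hgy2] : y3 = y1) n31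
      · exact absurd h (hg y3 (hR0 y3 hy3)).2.2
    have hgy0 : g y0 = y3 := by rw [← hgy3, hginv y3 (hR0 y3 hy3)]
    obtain ⟨Y, hY0, hY1, hY2, hY3⟩ : ∃ Y : ZMod (2 * 2) → Fin v,
        Y 0 = y0 ∧ Y 1 = y1 ∧ Y 2 = y2 ∧ Y 3 = y3 := by
      refine ⟨fun i => if i = 0 then y0 else if i = 1 then y1 else if i = 2 then y2 else y3,
        ?_, ?_, ?_, ?_⟩
      · dsimp only; rw [if_pos rfl]
      · dsimp only; rw [if_neg (by decide), if_pos rfl]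
      · dsimp only; rw [if_neg (by decide), if_neg (by decide), if_pos rfl]
      · dsimp only; rw [if_neg (by decide), if_neg (by decide), if_neg (by decide)]
    have h4 : ∀ i : ZMod (2 * 2), i = 0 ∨ i = 1 ∨ i = 2 ∨ i = 3 := by decide
    have h2' : ∀ j : Fin 2, j = 0 ∨ j = 1 := by decide
    have hYcyc : IsSwitchCycle S a b 2 Y := by
      refine ⟨le_refl 2, hab, ?_, ?_, ?_⟩
      · intro i j hij
        rcases h4 i with rfl | rfl | rfl | rfl <;> rcases h4 j with rfl | rfl | rfl | rfl <;>
          simp only [hY0, hY1, hY2, hY3] at hij <;>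
          first
            | rfl
            | exact absurd hij n10 | exact absurd hij n10.symm
            | exact absurd hij n20 | exact absurd hij n20.symm
            | exact absurd hij n21 | exact absurd hij n21.symm
            | exact absurd hij n30 | exact absurd hij n30.symm
            | exact absurd hij n31 | exact absurd hij n31.symm
            | exact absurd hij n32 | exact absurd hij n32.symm
      · intro i
        rcases h4 i with rfl | rfl | rfl | rfl
        · rw [show (0 : ZMod (2 * 2)) + 1 = 1 from by decide, hY0, hY1, ← hfy0]
          exact hAdjF y0 hy0
        · rw [show (1 : ZMod (2 * 2)) + 1 = 2 from by decide, hY1, hY2, ← hgy1]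
          exact hAdjG y1 hy1
        · rw [show (2 : ZMod (2 * 2)) + 1 = 3 from by decide, hY2, hY3, ← hfy2]
          exact hAdjF y2 hy2
        · rw [show (3 : ZMod (2 * 2)) + 1 = 0 from by decide, hY3, hY0, ← hgy3]
          exact hAdjG y3 hy3
      · intro j
        rcases h2' j with rfl | rfl
        · constructor
          · rw [show ((2 * ((0 : Fin 2) : ℕ) : ℕ) : ZMod (2 * 2)) = 0 from by decide,
              show ((2 * ((0 : Fin 2) : ℕ) + 1 : ℕ) : ZMod (2 * 2)) = 1 from by decide,
              hY0, hY1, ← hfy0]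
            exact (hf y0 (hR0 y0 hy0)).1
          · rw [show ((2 * ((0 : Fin 2) : ℕ) + 1 : ℕ) : ZMod (2 * 2)) = 1 from by decide,
              show ((2 * ((0 : Fin 2) : ℕ) + 2 : ℕ) : ZMod (2 * 2)) = 2 from by decide,
              hY1, hY2, ← hgy1]
            exact (hg y1 (hR0 y1 hy1)).1
        · constructor
          · rw [show ((2 * ((1 : Fin 2) : ℕ) : ℕ) : ZMod (2 * 2)) = 2 from by decide,
              show ((2 * ((1 : Fin 2) : ℕ) + 1 : ℕ) : ZMod (2 * 2)) = 3 from by decide,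
              hY2, hY3, ← hfy2]
            exact (hf y2 (hR0 y2 hy2)).1
          · rw [show ((2 * ((1 : Fin 2) : ℕ) + 1 : ℕ) : ZMod (2 * 2)) = 3 from by decide,
              show ((2 * ((1 : Fin 2) : ℕ) + 2 : ℕ) : ZMod (2 * 2)) = 0 from by decide,
              hY3, hY0, ← hgy3]
            exact (hg y3 (hR0 y3 hy3)).1
    have hRsI1 : ({a, y0, y1} : Finset (Fin v)) ∈ removedBlocks a b 2 Y := by
      apply Finset.mem_union_left
      refine Finset.mem_image.mpr ⟨0, Finset.mem_univ _, ?_⟩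
      rw [show ((2 * ((0 : Fin 2) : ℕ) : ℕ) : ZMod (2 * 2)) = 0 from by decide,
        show ((2 * ((0 : Fin 2) : ℕ) + 1 : ℕ) : ZMod (2 * 2)) = 1 from by decide, hY0, hY1]
    have hRsI2 : ({a, y2, y3} : Finset (Fin v)) ∈ removedBlocks a b 2 Y := by
      apply Finset.mem_union_left
      refine Finset.mem_image.mpr ⟨1, Finset.mem_univ _, ?_⟩
      rw [show ((2 * ((1 : Fin 2) : ℕ) : ℕ) : ZMod (2 * 2)) = 2 from by decide,
        show ((2 * ((1 : Fin 2) : ℕ) + 1 : ℕ) : ZMod (2 * 2)) = 3 from by decide, hY2, hY3]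
    have hRsI3 : ({b, y1, y2} : Finset (Fin v)) ∈ removedBlocks a b 2 Y := by
      apply Finset.mem_union_right
      refine Finset.mem_image.mpr ⟨0, Finset.mem_univ _, ?_⟩
      rw [show ((2 * ((0 : Fin 2) : ℕ) + 1 : ℕ) : ZMod (2 * 2)) = 1 from by decide,
        show ((2 * ((0 : Fin 2) : ℕ) + 2 : ℕ) : ZMod (2 * 2)) = 2 from by decide, hY1, hY2]
    have hRsI4 : ({b, y3, y0} : Finset (Fin v)) ∈ removedBlocks a b 2 Y := by
      apply Finset.mem_union_right
      refine Finset.mem_image.mpr ⟨1, Finset.mem_univ _, ?_⟩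
      rw [show ((2 * ((1 : Fin 2) : ℕ) + 1 : ℕ) : ZMod (2 * 2)) = 3 from by decide,
        show ((2 * ((1 : Fin 2) : ℕ) + 2 : ℕ) : ZMod (2 * 2)) = 0 from by decide, hY3, hY0]
    have hRsE : ∀ B ∈ removedBlocks a b 2 Y,
        B = {a, y0, y1} ∨ B = {a, y2, y3} ∨ B = {b, y1, y2} ∨ B = {b, y3, y0} := by
      intro B hB
      rw [removedBlocks] at hB
      simp only [Finset.mem_union, Finset.mem_image, Finset.mem_univ, true_and] at hB
      rcases hB with ⟨j, hj⟩ | ⟨j, hj⟩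
      · rcases h2' j with rfl | rfl
        · left
          rw [← hj, show ((2 * ((0 : Fin 2) : ℕ) : ℕ) : ZMod (2 * 2)) = 0 from by decide,
            show ((2 * ((0 : Fin 2) : ℕ) + 1 : ℕ) : ZMod (2 * 2)) = 1 from by decide, hY0, hY1]
        · right; left
          rw [← hj, show ((2 * ((1 : Fin 2) : ℕ) : ℕ) : ZMod (2 * 2)) = 2 from by decide,
            show ((2 * ((1 : Fin 2) : ℕ) + 1 : ℕ) : ZMod (2 * 2)) = 3 from by decide, hY2, hY3]
      · rcases h2' j with rfl | rfl
        · right; right; left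
          rw [← hj, show ((2 * ((0 : Fin 2) : ℕ) + 1 : ℕ) : ZMod (2 * 2)) = 1 from by decide,
            show ((2 * ((0 : Fin 2) : ℕ) + 2 : ℕ) : ZMod (2 * 2)) = 2 from by decide, hY1, hY2]
        · right; right; right
          rw [← hj, show ((2 * ((1 : Fin 2) : ℕ) + 1 : ℕ) : ZMod (2 * 2)) = 3 from by decide,
            show ((2 * ((1 : Fin 2) : ℕ) + 2 : ℕ) : ZMod (2 * 2)) = 0 from by decide, hY3, hY0]
    have hsubSmall : removedBlocks a b 2 Y ⊆ S.blocks := by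
      intro B hB
      rcases hRsE B hB with rfl | rfl | rfl | rfl
      · rw [← hfy0]; exact (hf y0 (hR0 y0 hy0)).1
      · rw [← hfy2]; exact (hf y2 (hR0 y2 hy2)).1
      · rw [← hgy1]; exact (hg y1 (hR0 y1 hy1)).1
      · rw [← hgy3]; exact (hg y3 (hR0 y3 hy3)).1
    have hdisjBS : ∀ B, B ∈ removedBlocks a b k x → B ∈ removedBlocks a b 2 Y → False := by
      intro B hB1 hB2
      obtain ⟨i, hiB⟩ : ∃ i, x i ∈ B := by
        rcases hRbigE B hB1 with ⟨j, rfl⟩ | ⟨j, rfl⟩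
        · exact ⟨((2 * (j : ℕ) : ℕ) : ZMod (2 * k)), by simp⟩
        · exact ⟨((2 * (j : ℕ) + 1 : ℕ) : ZMod (2 * k)), by simp⟩
      have hxa : x i ≠ a := fun h => hxB0 i (h ▸ haB0)
      have hxb : x i ≠ b := fun h => hxB0 i (h ▸ hbB0)
      rcases hRsE B hB2 with rfl | rfl | rfl | rfl <;>
        simp only [Finset.mem_insert, Finset.mem_singleton] at hiB
      · rcases hiB with h | h | h
        exacts [hxa h, hRx y0 hy0 i h, hRx y1 hy1 i h]
      · rcases hiB with h | h | h
        exacts [hxa h, hRx y2 hy2 i h, hRx y3 hy3 i h]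
      · rcases hiB with h | h | h
        exacts [hxb h, hRx y1 hy1 i h, hRx y2 hy2 i h]
      · rcases hiB with h | h | h
        exacts [hxb h, hRx y3 hy3 i h, hRx y0 hy0 i h]
    have hcover' : ∀ B ∈ S.blocks, a ∈ B ∨ b ∈ B →
        (a ∈ B ∧ b ∈ B) ∨ B ∈ removedBlocks a b k x ∨ B ∈ removedBlocks a b 2 Y := by
      intro B hB hor
      by_cases hcase : a ∈ B ∧ b ∈ B
      · exact Or.inl hcase
      right
      rcases hor with hcB | hcB
      · have hbB : b ∉ B := fun h => hcase ⟨hcB, h⟩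
        obtain ⟨z, hzB, hza⟩ : ∃ z ∈ B, z ≠ a := by
          have h1 : (B \ {a}).card = 2 := by
            rw [Finset.card_sdiff_of_subset (by simpa using hcB), S.card_blocks B hB,
              Finset.card_singleton]
          have h2' : (B \ {a}).Nonempty := by rw [← Finset.card_pos, h1]; norm_num
          obtain ⟨z, hz⟩ := h2'
          rw [Finset.mem_sdiff, Finset.mem_singleton] at hz
          exact ⟨z, hz.1, hz.2⟩
        have hzB0 : z ∉ B0 := by
          intro hzB0'
          have hBB0 : B = B0 := huniq a z (Ne.symm hza) B hB hcB hzB B0 hB0m haB0 hzB0'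
          exact hbB (hBB0 ▸ hbB0)
        have hBeq : B = {a, z, f z} :=
          huniq a z (Ne.symm hza) B hB hcB hzB _ (hf z hzB0).1 (by simp) (by simp)
        by_cases hzRg : ∃ i, x i = z
        · obtain ⟨i, rfl⟩ := hzRg
          left; rw [hBeq]; exact hAmem i
        · have hzRR : z ∈ R := (hmemR z).mpr ⟨hzB0, by push_neg at hzRg; exact hzRg⟩
          right
          rw [hRset] at hzRR
          simp only [Finset.mem_insert, Finset.mem_singleton] at hzRR
          rcases hzRR with rfl | rfl | rfl | rfl
          · rw [hBeq, hfy0]; exact hRsI1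
          · rw [hBeq, hfy1, aux_triple_swap]; exact hRsI1
          · rw [hBeq, hfy2]; exact hRsI2
          · rw [hBeq, hfy3, aux_triple_swap]; exact hRsI2
      · have haB : a ∉ B := fun h => hcase ⟨h, hcB⟩
        obtain ⟨z, hzB, hza⟩ : ∃ z ∈ B, z ≠ b := by
          have h1 : (B \ {b}).card = 2 := by
            rw [Finset.card_sdiff_of_subset (by simpa using hcB), S.card_blocks B hB,
              Finset.card_singleton]
          have h2' : (B \ {b}).Nonempty := by rw [← Finset.card_pos, h1]; norm_num
          obtain ⟨z, hz⟩ := h2'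
          rw [Finset.mem_sdiff, Finset.mem_singleton] at hz
          exact ⟨z, hz.1, hz.2⟩
        have hzB0 : z ∉ B0 := by
          intro hzB0'
          have hBB0 : B = B0 := huniq b z (Ne.symm hza) B hB hcB hzB B0 hB0m hbB0 hzB0'
          exact haB (hBB0 ▸ haB0)
        have hBeq : B = {b, z, g z} :=
          huniq b z (Ne.symm hza) B hB hcB hzB _ (hg z hzB0).1 (by simp) (by simp)
        by_cases hzRg : ∃ i, x i = z
        · obtain ⟨i, rfl⟩ := hzRg
          left; rw [hBeq]; exact hBmem i
        · have hzRR : z ∈ R := (hmemR z).mpr ⟨hzB0, by push_neg at hzRg; exact hzRg⟩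
          right
          rw [hRset] at hzRR
          simp only [Finset.mem_insert, Finset.mem_singleton] at hzRR
          rcases hzRR with rfl | rfl | rfl | rfl
          · rw [hBeq, hgy0, aux_triple_swap]; exact hRsI4
          · rw [hBeq, hgy1]; exact hRsI3
          · rw [hBeq, hgy2, aux_triple_swap]; exact hRsI3
          · rw [hBeq, hgy3]; exact hRsI4
    obtain ⟨S'', hstep, hiso⟩ := core S S' a b k 2 x Y hYcyc hS' hsubBig hsubSmall hdisjBS hcover'
    refine ⟨S'', ?_, hiso⟩
    have h44 : ({4} : Set ℕ) = {2 * 2} := by norm_num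
    rw [h44]; exact hstep
  · -- m = 6
    have hR6 : R.card = 6 := hcardR
    obtain ⟨y0, hy0⟩ : R.Nonempty := Finset.card_pos.mp (by omega)
    set y1 := f y0 with hy1d
    have hy1 : y1 ∈ R := hfR y0 hy0
    set y2 := g y1 with hy2d
    have hy2 : y2 ∈ R := hgR y1 hy1
    set y3 := f y2 with hy3d
    have hy3 : y3 ∈ R := hfR y2 hy2
    set y4 := g y3 with hy4d
    have hy4 : y4 ∈ R := hgR y3 hy3
    set y5 := f y4 with hy5d
    have hy5 : y5 ∈ R := hfR y4 hy4
    have hfy0 : f y0 = y1 := rfl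
    have hfy1 : f y1 = y0 := by rw [hy1d, hfinv y0 (hR0 y0 hy0)]
    have hgy1 : g y1 = y2 := rfl
    have hgy2 : g y2 = y1 := by rw [hy2d, hginv y1 (hR0 y1 hy1)]
    have hfy2 : f y2 = y3 := rfl
    have hfy3 : f y3 = y2 := by rw [hy3d, hfinv y2 (hR0 y2 hy2)]
    have hgy3 : g y3 = y4 := rfl
    have hgy4 : g y4 = y3 := by rw [hy4d, hginv y3 (hR0 y3 hy3)]
    have hfy4 : f y4 = y5 := rfl
    have hfy5 : f y5 = y4 := by rw [hy5d, hfinv y4 (hR0 y4 hy4)]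
    have n10 : y1 ≠ y0 := (hf y0 (hR0 y0 hy0)).2.2
    have n21 : y2 ≠ y1 := (hg y1 (hR0 y1 hy1)).2.2
    have n20 : y2 ≠ y0 := fun h => hfgne y1 (hR0 y1 hy1) (by rw [hfy1, hgy1, h])
    have n32 : y3 ≠ y2 := (hf y2 (hR0 y2 hy2)).2.2
    have n31 : y3 ≠ y1 := fun h => n20 (by rw [← hfy3, h, hfy1])
    have n30 : y3 ≠ y0 := fun h => n21 (by rw [← hfy3, h, hfy0])
    have n43 : y4 ≠ y3 := (hg y3 (hR0 y3 hy3)).2.2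
    have n42 : y4 ≠ y2 := fun h => n31 (by rw [← hgy4, h, hgy2])
    have n41 : y4 ≠ y1 := fun h => n32 (by rw [← hgy4, h, hgy1])
    have n40 : y4 ≠ y0 := by
      intro h40
      have hgy3' : g y3 = y0 := hgy3.trans h40
      have hgy0 : g y0 = y3 := by rw [← h40, hgy4]
      have hu_ex : ∃ u ∈ R, u ≠ y0 ∧ u ≠ y1 ∧ u ≠ y2 ∧ u ≠ y3 := by
        by_contra hcon
        push_neg at hcon
        have hss : R ⊆ ({y0, y1, y2, y3} : Finset (Fin v)) := by
          intro u hu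
          simp only [Finset.mem_insert, Finset.mem_singleton]
          by_cases e0 : u = y0
          · tauto
          by_cases e1 : u = y1
          · tauto
          by_cases e2 : u = y2
          · tauto
          exact Or.inr (Or.inr (Or.inr (hcon u hu e0 e1 e2)))
        have hc1 := Finset.card_le_card hss
        have hc2 := Finset.card_insert_le y0 ({y1, y2, y3} : Finset (Fin v))
        have hc3 := Finset.card_insert_le y1 ({y2, y3} : Finset (Fin v))
        have hc4 := Finset.card_insert_le y2 ({y3} : Finset (Fin v))
        have hc5 : ({y3} : Finset (Fin v)).card = 1 := Finset.card_singleton y3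
        rw [hR6] at hc1
        omega
      obtain ⟨u, huR, e0, e1, e2, e3⟩ := hu_ex
      have huB0 := hR0 u huR
      have hsub5 : ({y0, y1, y2, y3, u} : Finset (Fin v)) ⊆ R := by
        intro t ht
        simp only [Finset.mem_insert, Finset.mem_singleton] at ht
        rcases ht with rfl | rfl | rfl | rfl | rfl
        exacts [hy0, hy1, hy2, hy3, huR]
      have hcard5 : ({y0, y1, y2, y3, u} : Finset (Fin v)).card = 5 := by
        rw [Finset.card_insert_of_notMem (by simp [n10.symm, n20.symm, n30.symm, Ne.symm e0]),
          Finset.card_insert_of_notMem (by simp [n21.symm, n31.symm, Ne.symm e1]),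
          Finset.card_insert_of_notMem (by simp [n32.symm, Ne.symm e2]),
          Finset.card_insert_of_notMem (by simp [Ne.symm e3]),
          Finset.card_singleton]
      have hT : (R \ ({y0, y1, y2, y3, u} : Finset (Fin v))).card = 1 := by
        rw [Finset.card_sdiff_of_subset hsub5, hR6, hcard5]
      obtain ⟨t, ht⟩ := Finset.card_eq_one.mp hT
      have hfu5 : f u ∈ R \ ({y0, y1, y2, y3, u} : Finset (Fin v)) := by
        rw [Finset.mem_sdiff]
        refine ⟨hfR u huR, ?_⟩
        simp only [Finset.mem_insert, Finset.mem_singleton, not_or]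
        refine ⟨?_, ?_, ?_, ?_, (hf u huB0).2.2⟩
        · intro h; exact e1 (by rw [← hfinv u huB0, h, hfy0])
        · intro h; exact e0 (by rw [← hfinv u huB0, h, hfy1])
        · intro h; exact e3 (by rw [← hfinv u huB0, h, hfy2])
        · intro h; exact e2 (by rw [← hfinv u huB0, h, hfy3])
      have hgu5 : g u ∈ R \ ({y0, y1, y2, y3, u} : Finset (Fin v)) := by
        rw [Finset.mem_sdiff]
        refine ⟨hgR u huR, ?_⟩
        simp only [Finset.mem_insert, Finset.mem_singleton, not_or]
        refine ⟨?_, ?_, ?_, ?_, (hg u huB0).2.2⟩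
        · intro h; exact e3 (by rw [← hginv u huB0, h, hgy0])
        · intro h; exact e2 (by rw [← hginv u huB0, h, hgy1])
        · intro h; exact e1 (by rw [← hginv u huB0, h, hgy2])
        · intro h; exact e0 (by rw [← hginv u huB0, h, hgy3'])
      rw [ht, Finset.mem_singleton] at hfu5 hgu5
      exact hfgne u huB0 (hfu5.trans hgu5.symm)
    have n54 : y5 ≠ y4 := (hf y4 (hR0 y4 hy4)).2.2
    have n50 : y5 ≠ y0 := fun h => n41 (by rw [← hfy5, h, hfy0])
    have n51 : y5 ≠ y1 := fun h => n40 (by rw [← hfy5, h, hfy1])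
    have n52 : y5 ≠ y2 := fun h => n43 (by rw [← hfy5, h, hfy2])
    have n53 : y5 ≠ y3 := fun h => n42 (by rw [← hfy5, h, hfy3])
    have c6 : ({y0, y1, y2, y3, y4, y5} : Finset (Fin v)).card = 6 := by
      rw [Finset.card_insert_of_notMem
          (by simp [n10.symm, n20.symm, n30.symm, n40.symm, n50.symm]),
        Finset.card_insert_of_notMem (by simp [n21.symm, n31.symm, n41.symm, n51.symm]),
        Finset.card_insert_of_notMem (by simp [n32.symm, n42.symm, n52.symm]),
        Finset.card_insert_of_notMem (by simp [n43.symm, n53.symm]),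
        Finset.card_insert_of_notMem (by simp [n54.symm]),
        Finset.card_singleton]
    have hRset : R = {y0, y1, y2, y3, y4, y5} := by
      symm
      apply Finset.eq_of_subset_of_card_le
      · intro t ht
        simp only [Finset.mem_insert, Finset.mem_singleton] at ht
        rcases ht with rfl | rfl | rfl | rfl | rfl | rfl
        exacts [hy0, hy1, hy2, hy3, hy4, hy5]
      · rw [hR6, c6]
    have hgy5 : g y5 = y0 := by
      have h5 : g y5 ∈ R := hgR y5 hy5
      rw [hRset] at h5
      simp only [Finset.mem_insert, Finset.mem_singleton] at h5
      rcases h5 with h | h | h | h | h | h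
      · exact h
      · exact absurd (by rw [← hginv y5 (hR0 y5 hy5), h, hgy1] : y5 = y2) n52
      · exact absurd (by rw [← hginv y5 (hR0 y5 hy5), h, hgy2] : y5 = y1) n51
      · exact absurd (by rw [← hginv y5 (hR0 y5 hy5), h, hgy3] : y5 = y4) n54
      · exact absurd (by rw [← hginv y5 (hR0 y5 hy5), h, hgy4] : y5 = y3) n53
      · exact absurd h (hg y5 (hR0 y5 hy5)).2.2
    have hgy0 : g y0 = y5 := by rw [← hgy5, hginv y5 (hR0 y5 hy5)]
    obtain ⟨Y, hY0, hY1, hY2, hY3, hY4, hY5⟩ : ∃ Y : ZMod (2 * 3) → Fin v,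
        Y 0 = y0 ∧ Y 1 = y1 ∧ Y 2 = y2 ∧ Y 3 = y3 ∧ Y 4 = y4 ∧ Y 5 = y5 := by
      refine ⟨fun i => if i = 0 then y0 else if i = 1 then y1 else if i = 2 then y2
        else if i = 3 then y3 else if i = 4 then y4 else y5, ?_, ?_, ?_, ?_, ?_, ?_⟩
      · dsimp only; rw [if_pos rfl]
      · dsimp only; rw [if_neg (by decide), if_pos rfl]
      · dsimp only; rw [if_neg (by decide), if_neg (by decide), if_pos rfl]
      · dsimp only; rw [if_neg (by decide), if_neg (by decide), if_neg (by decide), if_pos rfl]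
      · dsimp only
        rw [if_neg (by decide), if_neg (by decide), if_neg (by decide), if_neg (by decide),
          if_pos rfl]
      · dsimp only
        rw [if_neg (by decide), if_neg (by decide), if_neg (by decide), if_neg (by decide),
          if_neg (by decide)]
    have h6 : ∀ i : ZMod (2 * 3), i = 0 ∨ i = 1 ∨ i = 2 ∨ i = 3 ∨ i = 4 ∨ i = 5 := by decide
    have h3' : ∀ j : Fin 3, j = 0 ∨ j = 1 ∨ j = 2 := by decide
    have hYcyc : IsSwitchCycle S a b 3 Y := by
      refine ⟨by norm_num, hab, ?_, ?_, ?_⟩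
      · intro i j hij
        rcases h6 i with rfl | rfl | rfl | rfl | rfl | rfl <;>
          rcases h6 j with rfl | rfl | rfl | rfl | rfl | rfl <;>
          simp only [hY0, hY1, hY2, hY3, hY4, hY5] at hij <;>
          first
            | rfl
            | exact absurd hij n10 | exact absurd hij n10.symm
            | exact absurd hij n20 | exact absurd hij n20.symm
            | exact absurd hij n21 | exact absurd hij n21.symm
            | exact absurd hij n30 | exact absurd hij n30.symm
            | exact absurd hij n31 | exact absurd hij n31.symm
            | exact absurd hij n32 | exact absurd hij n32.symm
            | exact absurd hij n40 | exact absurd hij n40.symm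
            | exact absurd hij n41 | exact absurd hij n41.symm
            | exact absurd hij n42 | exact absurd hij n42.symm
            | exact absurd hij n43 | exact absurd hij n43.symm
            | exact absurd hij n50 | exact absurd hij n50.symm
            | exact absurd hij n51 | exact absurd hij n51.symm
            | exact absurd hij n52 | exact absurd hij n52.symm
            | exact absurd hij n53 | exact absurd hij n53.symm
            | exact absurd hij n54 | exact absurd hij n54.symm
      · intro i
        rcases h6 i with rfl | rfl | rfl | rfl | rfl | rfl
        · rw [show (0 : ZMod (2 * 3)) + 1 = 1 from by decide, hY0, hY1, ← hfy0]
          exact hAdjF y0 hy0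
        · rw [show (1 : ZMod (2 * 3)) + 1 = 2 from by decide, hY1, hY2, ← hgy1]
          exact hAdjG y1 hy1
        · rw [show (2 : ZMod (2 * 3)) + 1 = 3 from by decide, hY2, hY3, ← hfy2]
          exact hAdjF y2 hy2
        · rw [show (3 : ZMod (2 * 3)) + 1 = 4 from by decide, hY3, hY4, ← hgy3]
          exact hAdjG y3 hy3
        · rw [show (4 : ZMod (2 * 3)) + 1 = 5 from by decide, hY4, hY5, ← hfy4]
          exact hAdjF y4 hy4
        · rw [show (5 : ZMod (2 * 3)) + 1 = 0 from by decide, hY5, hY0, ← hgy5]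
          exact hAdjG y5 hy5
      · intro j
        rcases h3' j with rfl | rfl | rfl
        · constructor
          · rw [show ((2 * ((0 : Fin 3) : ℕ) : ℕ) : ZMod (2 * 3)) = 0 from by decide,
              show ((2 * ((0 : Fin 3) : ℕ) + 1 : ℕ) : ZMod (2 * 3)) = 1 from by decide,
              hY0, hY1, ← hfy0]
            exact (hf y0 (hR0 y0 hy0)).1
          · rw [show ((2 * ((0 : Fin 3) : ℕ) + 1 : ℕ) : ZMod (2 * 3)) = 1 from by decide,
              show ((2 * ((0 : Fin 3) : ℕ) + 2 : ℕ) : ZMod (2 * 3)) = 2 from by decide,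
              hY1, hY2, ← hgy1]
            exact (hg y1 (hR0 y1 hy1)).1
        · constructor
          · rw [show ((2 * ((1 : Fin 3) : ℕ) : ℕ) : ZMod (2 * 3)) = 2 from by decide,
              show ((2 * ((1 : Fin 3) : ℕ) + 1 : ℕ) : ZMod (2 * 3)) = 3 from by decide,
              hY2, hY3, ← hfy2]
            exact (hf y2 (hR0 y2 hy2)).1
          · rw [show ((2 * ((1 : Fin 3) : ℕ) + 1 : ℕ) : ZMod (2 * 3)) = 3 from by decide,
              show ((2 * ((1 : Fin 3) : ℕ) + 2 : ℕ) : ZMod (2 * 3)) = 4 from by decide,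
              hY3, hY4, ← hgy3]
            exact (hg y3 (hR0 y3 hy3)).1
        · constructor
          · rw [show ((2 * ((2 : Fin 3) : ℕ) : ℕ) : ZMod (2 * 3)) = 4 from by decide,
              show ((2 * ((2 : Fin 3) : ℕ) + 1 : ℕ) : ZMod (2 * 3)) = 5 from by decide,
              hY4, hY5, ← hfy4]
            exact (hf y4 (hR0 y4 hy4)).1
          · rw [show ((2 * ((2 : Fin 3) : ℕ) + 1 : ℕ) : ZMod (2 * 3)) = 5 from by decide,
              show ((2 * ((2 : Fin 3) : ℕ) + 2 : ℕ) : ZMod (2 * 3)) = 0 from by decide,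
              hY5, hY0, ← hgy5]
            exact (hg y5 (hR0 y5 hy5)).1
    have hRsI1 : ({a, y0, y1} : Finset (Fin v)) ∈ removedBlocks a b 3 Y := by
      apply Finset.mem_union_left
      refine Finset.mem_image.mpr ⟨0, Finset.mem_univ _, ?_⟩
      rw [show ((2 * ((0 : Fin 3) : ℕ) : ℕ) : ZMod (2 * 3)) = 0 from by decide,
        show ((2 * ((0 : Fin 3) : ℕ) + 1 : ℕ) : ZMod (2 * 3)) = 1 from by decide, hY0, hY1]
    have hRsI2 : ({a, y2, y3} : Finset (Fin v)) ∈ removedBlocks a b 3 Y := by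
      apply Finset.mem_union_left
      refine Finset.mem_image.mpr ⟨1, Finset.mem_univ _, ?_⟩
      rw [show ((2 * ((1 : Fin 3) : ℕ) : ℕ) : ZMod (2 * 3)) = 2 from by decide,
        show ((2 * ((1 : Fin 3) : ℕ) + 1 : ℕ) : ZMod (2 * 3)) = 3 from by decide, hY2, hY3]
    have hRsI3 : ({a, y4, y5} : Finset (Fin v)) ∈ removedBlocks a b 3 Y := by
      apply Finset.mem_union_left
      refine Finset.mem_image.mpr ⟨2, Finset.mem_univ _, ?_⟩
      rw [show ((2 * ((2 : Fin 3) : ℕ) : ℕ) : ZMod (2 * 3)) = 4 from by decide,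
        show ((2 * ((2 : Fin 3) : ℕ) + 1 : ℕ) : ZMod (2 * 3)) = 5 from by decide, hY4, hY5]
    have hRsI4 : ({b, y1, y2} : Finset (Fin v)) ∈ removedBlocks a b 3 Y := by
      apply Finset.mem_union_right
      refine Finset.mem_image.mpr ⟨0, Finset.mem_univ _, ?_⟩
      rw [show ((2 * ((0 : Fin 3) : ℕ) + 1 : ℕ) : ZMod (2 * 3)) = 1 from by decide,
        show ((2 * ((0 : Fin 3) : ℕ) + 2 : ℕ) : ZMod (2 * 3)) = 2 from by decide, hY1, hY2]
    have hRsI5 : ({b, y3, y4} : Finset (Fin v)) ∈ removedBlocks a b 3 Y := by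
      apply Finset.mem_union_right
      refine Finset.mem_image.mpr ⟨1, Finset.mem_univ _, ?_⟩
      rw [show ((2 * ((1 : Fin 3) : ℕ) + 1 : ℕ) : ZMod (2 * 3)) = 3 from by decide,
        show ((2 * ((1 : Fin 3) : ℕ) + 2 : ℕ) : ZMod (2 * 3)) = 4 from by decide, hY3, hY4]
    have hRsI6 : ({b, y5, y0} : Finset (Fin v)) ∈ removedBlocks a b 3 Y := by
      apply Finset.mem_union_right
      refine Finset.mem_image.mpr ⟨2, Finset.mem_univ _, ?_⟩
      rw [show ((2 * ((2 : Fin 3) : ℕ) + 1 : ℕ) : ZMod (2 * 3)) = 5 from by decide,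
        show ((2 * ((2 : Fin 3) : ℕ) + 2 : ℕ) : ZMod (2 * 3)) = 0 from by decide, hY5, hY0]
    have hRsE : ∀ B ∈ removedBlocks a b 3 Y,
        B = {a, y0, y1} ∨ B = {a, y2, y3} ∨ B = {a, y4, y5} ∨
        B = {b, y1, y2} ∨ B = {b, y3, y4} ∨ B = {b, y5, y0} := by
      intro B hB
      rw [removedBlocks] at hB
      simp only [Finset.mem_union, Finset.mem_image, Finset.mem_univ, true_and] at hB
      rcases hB with ⟨j, hj⟩ | ⟨j, hj⟩
      · rcases h3' j with rfl | rfl | rfl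
        · left
          rw [← hj, show ((2 * ((0 : Fin 3) : ℕ) : ℕ) : ZMod (2 * 3)) = 0 from by decide,
            show ((2 * ((0 : Fin 3) : ℕ) + 1 : ℕ) : ZMod (2 * 3)) = 1 from by decide, hY0, hY1]
        · right; left
          rw [← hj, show ((2 * ((1 : Fin 3) : ℕ) : ℕ) : ZMod (2 * 3)) = 2 from by decide,
            show ((2 * ((1 : Fin 3) : ℕ) + 1 : ℕ) : ZMod (2 * 3)) = 3 from by decide, hY2, hY3]
        · right; right; left
          rw [← hj, show ((2 * ((2 : Fin 3) : ℕ) : ℕ) : ZMod (2 * 3)) = 4 from by decide,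
            show ((2 * ((2 : Fin 3) : ℕ) + 1 : ℕ) : ZMod (2 * 3)) = 5 from by decide, hY4, hY5]
      · rcases h3' j with rfl | rfl | rfl
        · right; right; right; left
          rw [← hj, show ((2 * ((0 : Fin 3) : ℕ) + 1 : ℕ) : ZMod (2 * 3)) = 1 from by decide,
            show ((2 * ((0 : Fin 3) : ℕ) + 2 : ℕ) : ZMod (2 * 3)) = 2 from by decide, hY1, hY2]
        · right; right; right; right; left
          rw [← hj, show ((2 * ((1 : Fin 3) : ℕ) + 1 : ℕ) : ZMod (2 * 3)) = 3 from by decide,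
            show ((2 * ((1 : Fin 3) : ℕ) + 2 : ℕ) : ZMod (2 * 3)) = 4 from by decide, hY3, hY4]
        · right; right; right; right; right
          rw [← hj, show ((2 * ((2 : Fin 3) : ℕ) + 1 : ℕ) : ZMod (2 * 3)) = 5 from by decide,
            show ((2 * ((2 : Fin 3) : ℕ) + 2 : ℕ) : ZMod (2 * 3)) = 0 from by decide, hY5, hY0]
    have hsubSmall : removedBlocks a b 3 Y ⊆ S.blocks := by
      intro B hB
      rcases hRsE B hB with rfl | rfl | rfl | rfl | rfl | rfl
      · rw [← hfy0]; exact (hf y0 (hR0 y0 hy0)).1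
      · rw [← hfy2]; exact (hf y2 (hR0 y2 hy2)).1
      · rw [← hfy4]; exact (hf y4 (hR0 y4 hy4)).1
      · rw [← hgy1]; exact (hg y1 (hR0 y1 hy1)).1
      · rw [← hgy3]; exact (hg y3 (hR0 y3 hy3)).1
      · rw [← hgy5]; exact (hg y5 (hR0 y5 hy5)).1
    have hdisjBS : ∀ B, B ∈ removedBlocks a b k x → B ∈ removedBlocks a b 3 Y → False := by
      intro B hB1 hB2
      obtain ⟨i, hiB⟩ : ∃ i, x i ∈ B := by
        rcases hRbigE B hB1 with ⟨j, rfl⟩ | ⟨j, rfl⟩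
        · exact ⟨((2 * (j : ℕ) : ℕ) : ZMod (2 * k)), by simp⟩
        · exact ⟨((2 * (j : ℕ) + 1 : ℕ) : ZMod (2 * k)), by simp⟩
      have hxa : x i ≠ a := fun h => hxB0 i (h ▸ haB0)
      have hxb : x i ≠ b := fun h => hxB0 i (h ▸ hbB0)
      rcases hRsE B hB2 with rfl | rfl | rfl | rfl | rfl | rfl <;>
        simp only [Finset.mem_insert, Finset.mem_singleton] at hiB
      · rcases hiB with h | h | h
        exacts [hxa h, hRx y0 hy0 i h, hRx y1 hy1 i h]
      · rcases hiB with h | h | h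
        exacts [hxa h, hRx y2 hy2 i h, hRx y3 hy3 i h]
      · rcases hiB with h | h | h
        exacts [hxa h, hRx y4 hy4 i h, hRx y5 hy5 i h]
      · rcases hiB with h | h | h
        exacts [hxb h, hRx y1 hy1 i h, hRx y2 hy2 i h]
      · rcases hiB with h | h | h
        exacts [hxb h, hRx y3 hy3 i h, hRx y4 hy4 i h]
      · rcases hiB with h | h | h
        exacts [hxb h, hRx y5 hy5 i h, hRx y0 hy0 i h]
    have hcover' : ∀ B ∈ S.blocks, a ∈ B ∨ b ∈ B →
        (a ∈ B ∧ b ∈ B) ∨ B ∈ removedBlocks a b k x ∨ B ∈ removedBlocks a b 3 Y := by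
      intro B hB hor
      by_cases hcase : a ∈ B ∧ b ∈ B
      · exact Or.inl hcase
      right
      rcases hor with hcB | hcB
      · have hbB : b ∉ B := fun h => hcase ⟨hcB, h⟩
        obtain ⟨z, hzB, hza⟩ : ∃ z ∈ B, z ≠ a := by
          have h1 : (B \ {a}).card = 2 := by
            rw [Finset.card_sdiff_of_subset (by simpa using hcB), S.card_blocks B hB,
              Finset.card_singleton]
          have h2' : (B \ {a}).Nonempty := by rw [← Finset.card_pos, h1]; norm_num
          obtain ⟨z, hz⟩ := h2'
          rw [Finset.mem_sdiff, Finset.mem_singleton] at hz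
          exact ⟨z, hz.1, hz.2⟩
        have hzB0 : z ∉ B0 := by
          intro hzB0'
          have hBB0 : B = B0 := huniq a z (Ne.symm hza) B hB hcB hzB B0 hB0m haB0 hzB0'
          exact hbB (hBB0 ▸ hbB0)
        have hBeq : B = {a, z, f z} :=
          huniq a z (Ne.symm hza) B hB hcB hzB _ (hf z hzB0).1 (by simp) (by simp)
        by_cases hzRg : ∃ i, x i = z
        · obtain ⟨i, rfl⟩ := hzRg
          left; rw [hBeq]; exact hAmem i
        · have hzRR : z ∈ R := (hmemR z).mpr ⟨hzB0, by push_neg at hzRg; exact hzRg⟩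
          right
          rw [hRset] at hzRR
          simp only [Finset.mem_insert, Finset.mem_singleton] at hzRR
          rcases hzRR with rfl | rfl | rfl | rfl | rfl | rfl
          · rw [hBeq, hfy0]; exact hRsI1
          · rw [hBeq, hfy1, aux_triple_swap]; exact hRsI1
          · rw [hBeq, hfy2]; exact hRsI2
          · rw [hBeq, hfy3, aux_triple_swap]; exact hRsI2
          · rw [hBeq, hfy4]; exact hRsI3
          · rw [hBeq, hfy5, aux_triple_swap]; exact hRsI3
      · have haB : a ∉ B := fun h => hcase ⟨h, hcB⟩
        obtain ⟨z, hzB, hza⟩ : ∃ z ∈ B, z ≠ b := by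
          have h1 : (B \ {b}).card = 2 := by
            rw [Finset.card_sdiff_of_subset (by simpa using hcB), S.card_blocks B hB,
              Finset.card_singleton]
          have h2' : (B \ {b}).Nonempty := by rw [← Finset.card_pos, h1]; norm_num
          obtain ⟨z, hz⟩ := h2'
          rw [Finset.mem_sdiff, Finset.mem_singleton] at hz
          exact ⟨z, hz.1, hz.2⟩
        have hzB0 : z ∉ B0 := by
          intro hzB0'
          have hBB0 : B = B0 := huniq b z (Ne.symm hza) B hB hcB hzB B0 hB0m hbB0 hzB0'
          exact haB (hBB0 ▸ haB0)
        have hBeq : B = {b, z, g z} :=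
          huniq b z (Ne.symm hza) B hB hcB hzB _ (hg z hzB0).1 (by simp) (by simp)
        by_cases hzRg : ∃ i, x i = z
        · obtain ⟨i, rfl⟩ := hzRg
          left; rw [hBeq]; exact hBmem i
        · have hzRR : z ∈ R := (hmemR z).mpr ⟨hzB0, by push_neg at hzRg; exact hzRg⟩
          right
          rw [hRset] at hzRR
          simp only [Finset.mem_insert, Finset.mem_singleton] at hzRR
          rcases hzRR with rfl | rfl | rfl | rfl | rfl | rfl
          · rw [hBeq, hgy0, aux_triple_swap]; exact hRsI6
          · rw [hBeq, hgy1]; exact hRsI4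
          · rw [hBeq, hgy2, aux_triple_swap]; exact hRsI4
          · rw [hBeq, hgy3]; exact hRsI5
          · rw [hBeq, hgy4, aux_triple_swap]; exact hRsI5
          · rw [hBeq, hgy5]; exact hRsI6
    obtain ⟨S'', hstep, hiso⟩ := core S S' a b k 3 x Y hYcyc hS' hsubBig hsubSmall hdisjBS hcover'
    refine ⟨S'', ?_, hiso⟩
    have h66 : ({6} : Set ℕ) = {2 * 3} := by norm_num
    rw [h66]; exact hstep

/-- For `v ≥ 13`, the connected component of an isomorphism class `u`
in `Sw_{v-7}(v)` is a subgraph of the connected component of `u` in `Sw_4(v)` (every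
edge of `Sw_{v-7}(v)` is an edge of `Sw_4(v)`, and every class reachable from `u` in
`Sw_{v-7}(v)` is reachable from `u` in `Sw_4(v)`); similarly the component of `u` in
`Sw_{v-9}(v)` is a subgraph of the component of `u` in `Sw_6(v)`. -/
theorem component_subgraph (v : ℕ) (hv : 13 ≤ v) (q q' : Quot (@STS.Iso v)) :
    ((SwGraph v {v - 7}).Adj q q' → (SwGraph v {4}).Adj q q') ∧
    ((SwGraph v {v - 7}).Reachable q q' → (SwGraph v {4}).Reachable q q') ∧
    ((SwGraph v {v - 9}).Adj q q' → (SwGraph v {6}).Adj q q') ∧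
    ((SwGraph v {v - 9}).Reachable q q' → (SwGraph v {6}).Reachable q q') := by
  have hmain : ∀ (m : ℕ), m = 4 ∨ m = 6 → ∀ (q q' : Quot (@STS.Iso v)),
      (SwGraph v {v - (m + 3)}).Adj q q' → (SwGraph v {m}).Adj q q' := by
    intro m hm q q' h
    have hv' : m + 7 ≤ v := by rcases hm with rfl | rfl <;> omega
    rw [SwGraph, SimpleGraph.fromRel_adj] at h ⊢
    obtain ⟨hne, h | h⟩ := h
    · obtain ⟨S, S', hq, hq', hstep⟩ := h
      obtain ⟨S'', hstep', hiso⟩ := key m hm hv' S S' hstep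
      exact ⟨hne, Or.inl ⟨S, S'', hq, (Quot.sound hiso).trans hq', hstep'⟩⟩
    · obtain ⟨S, S', hq, hq', hstep⟩ := h
      obtain ⟨S'', hstep', hiso⟩ := key m hm hv' S S' hstep
      exact ⟨hne, Or.inr ⟨S, S'', hq, (Quot.sound hiso).trans hq', hstep'⟩⟩
  have e4 : v - (4 + 3) = v - 7 := by norm_num
  have e6 : v - (6 + 3) = v - 9 := by norm_num
  have h4 : ∀ (q q' : Quot (@STS.Iso v)),
      (SwGraph v {v - 7}).Adj q q' → (SwGraph v {4}).Adj q q' := by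
    intro q q' h
    exact hmain 4 (Or.inl rfl) q q' (by rw [e4]; exact h)
  have h6 : ∀ (q q' : Quot (@STS.Iso v)),
      (SwGraph v {v - 9}).Adj q q' → (SwGraph v {6}).Adj q q' := by
    intro q q' h
    exact hmain 6 (Or.inr rfl) q q' (by rw [e6]; exact h)
  have hle4 : SwGraph v {v - 7} ≤ SwGraph v {4} := fun {p p'} h => h4 p p' h
  have hle6 : SwGraph v {v - 9} ≤ SwGraph v {6} := fun {p p'} h => h6 p p' h
  exact ⟨h4 q q', fun h => h.mono hle4, h6 q q', fun h => h.mono hle6⟩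
end
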